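/- arXiv:2508.18878 — 5 statements merged into one kernel-verified Lean document; each statement's English description precedes it below -/
import Mathlib

section
/- Let X be a real random variable with X ≤ 1 almost surely and E[X] ≤ 0. Then E[exp(X)] ≤ exp(E[X²]). -/
open MeasureTheory Real

lemma key_ineq {x : ℝ} (hx : x ≤ 1) : Real.exp x ≤ 1 + x + x ^ 2 := by
  rcases le_or_gt x 0 with h | h
  · have h1 : Real.exp x ≤ 1 / (1 - x) := by
      have h2 : 1 - x ≤ Real.exp (-x) := by
        have := Real.add_one_le_exp (-x); linarith
      have h3 : 0 < 1 - x := by linarith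
      rw [le_div_iff₀ h3]
      calc Real.exp x * (1 - x) ≤ Real.exp x * Real.exp (-x) := by
            exact mul_le_mul_of_nonneg_left h2 (Real.exp_pos x).le
        _ = 1 := by rw [← Real.exp_add]; simp
    have h4 : 1 / (1 - x) ≤ 1 + x + x ^ 2 := by
      rw [div_le_iff₀ (by linarith)]
      nlinarith [sq_nonneg x, mul_nonneg (mul_nonneg (neg_nonneg.2 h) (neg_nonneg.2 h)) (neg_nonneg.2 h)]
    linarith
  · have h' := Real.exp_bound' h.le hx (n := 3) (by norm_num)
    have hsum : (∑ m ∈ Finset.range 3, x ^ m / m.factorial) = 1 + x + x ^ 2 / 2 := by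
      simp [Finset.sum_range_succ, Nat.factorial]
    rw [hsum] at h'
    norm_num [Nat.factorial] at h'
    have hx3 : x ^ 3 ≤ x ^ 2 := by nlinarith
    nlinarith

theorem stmt_0 {Ω : Type*} [MeasurableSpace Ω] (μ : Measure Ω) [IsProbabilityMeasure μ]
    (X : Ω → ℝ) (hXmeas : Measurable X)
    (hXint : Integrable X μ) (hX2int : Integrable (fun ω => (X ω) ^ 2) μ)
    (hexpint : Integrable (fun ω => Real.exp (X ω)) μ)
    (hle : ∀ ω, X ω ≤ 1) (hmean : ∫ ω, X ω ∂μ ≤ 0) :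
    ∫ ω, Real.exp (X ω) ∂μ ≤ Real.exp (∫ ω, (X ω) ^ 2 ∂μ) := by
  have h1 : ∫ ω, Real.exp (X ω) ∂μ ≤ ∫ ω, (1 + X ω + (X ω) ^ 2) ∂μ := by
    apply integral_mono hexpint
    · exact ((integrable_const 1).add hXint).add hX2int
    · intro ω; exact key_ineq (hle ω)
  have h2 : ∫ ω, (1 + X ω + (X ω) ^ 2) ∂μ
      = 1 + (∫ ω, X ω ∂μ) + ∫ ω, (X ω) ^ 2 ∂μ := by
    have hA : Integrable (fun ω => 1 + X ω) μ := by
      simpa using (integrable_const (1:ℝ)).add hXint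
    rw [integral_add hA hX2int, integral_add (integrable_const 1) hXint]
    simp
  have h3 : 0 ≤ ∫ ω, (X ω) ^ 2 ∂μ := integral_nonneg fun ω => sq_nonneg _
  have h4 : 1 + (∫ ω, (X ω) ^ 2 ∂μ) ≤ Real.exp (∫ ω, (X ω) ^ 2 ∂μ) := by
    have := Real.add_one_le_exp (∫ ω, (X ω) ^ 2 ∂μ); linarith
  linarith
end

section
/- The function f(x) = (exp(x) − 1 − x)/x² (extended by f(0) = 1/2) is nondecreasing on ℝ. -/
open Real Set Filter

private lemma q_hasDeriv (x : ℝ) :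
    HasDerivAt (fun x : ℝ => Real.exp x - (1 + x + x ^ 2 / 2)) (Real.exp x - (1 + x)) x := by
  have h : HasDerivAt (fun x : ℝ => Real.exp x - (1 + x + x ^ 2 / 2))
      (Real.exp x - (0 + 1 + (↑2 * x ^ (2 - 1)) / 2)) x := by
    exact (Real.hasDerivAt_exp x).sub
      (((hasDerivAt_const x (1 : ℝ)).add (hasDerivAt_id x)).add ((hasDerivAt_pow 2 x).div_const 2))
  convert h using 1
  push_cast
  ring

private lemma q_mono : Monotone (fun x : ℝ => Real.exp x - (1 + x + x ^ 2 / 2)) := by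
  apply monotone_of_deriv_nonneg
  · exact fun x => (q_hasDeriv x).differentiableAt
  · intro x
    rw [(q_hasDeriv x).deriv]
    have := Real.add_one_le_exp x
    linarith

private lemma exp_le_quad {x : ℝ} (hx : x ≤ 0) : Real.exp x ≤ 1 + x + x ^ 2 / 2 := by
  have := q_mono hx
  simp only [Real.exp_zero] at this
  linarith

private lemma quad_le_exp {x : ℝ} (hx : 0 ≤ x) : 1 + x + x ^ 2 / 2 ≤ Real.exp x := by
  have := q_mono hx
  simp only [Real.exp_zero] at this
  linarith

private lemma g_hasDeriv (x : ℝ) :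
    HasDerivAt (fun x : ℝ => x * Real.exp x - 2 * Real.exp x + x + 2)
      ((x - 1) * Real.exp x + 1) x := by
  have h : HasDerivAt (fun x : ℝ => x * Real.exp x - 2 * Real.exp x + x + 2)
      ((1 * Real.exp x + x * Real.exp x - 2 * Real.exp x + 1) + 0) x := by
    exact ((((hasDerivAt_id x).mul (Real.hasDerivAt_exp x)).sub
      ((Real.hasDerivAt_exp x).const_mul 2)).add (hasDerivAt_id x)).add (hasDerivAt_const x 2)
  convert h using 1
  ring

private lemma g_deriv_pos {x : ℝ} (hx : x ≠ 0) : 0 < (x - 1) * Real.exp x + 1 := by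
  have h : -x + 1 < Real.exp (-x) := Real.add_one_lt_exp (neg_ne_zero.mpr hx)
  have h2 := mul_lt_mul_of_pos_right h (Real.exp_pos x)
  rw [← Real.exp_add] at h2
  simp only [neg_add_cancel, Real.exp_zero] at h2
  nlinarith

private lemma g_pos {x : ℝ} (hx : 0 < x) : 0 < x * Real.exp x - 2 * Real.exp x + x + 2 := by
  have hsm : StrictMonoOn (fun x : ℝ => x * Real.exp x - 2 * Real.exp x + x + 2) (Ici 0) := by
    apply strictMonoOn_of_deriv_pos (convex_Ici 0)
    · exact (Continuous.continuousOn (by continuity))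
    · intro y hy
      rw [interior_Ici] at hy
      rw [(g_hasDeriv y).deriv]
      exact g_deriv_pos (ne_of_gt hy)
  have := hsm (self_mem_Ici) (le_of_lt hx) hx
  simpa using this

private lemma g_neg {x : ℝ} (hx : x < 0) : x * Real.exp x - 2 * Real.exp x + x + 2 < 0 := by
  have hsm : StrictMonoOn (fun x : ℝ => x * Real.exp x - 2 * Real.exp x + x + 2) (Iic 0) := by
    apply strictMonoOn_of_deriv_pos (convex_Iic 0)
    · exact (Continuous.continuousOn (by continuity))
    · intro y hy
      rw [interior_Iic] at hy
      rw [(g_hasDeriv y).deriv]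
      exact g_deriv_pos (ne_of_lt hy)
  have := hsm (le_of_lt hx) (self_mem_Iic) hx
  simpa using this

private lemma r_hasDeriv {x : ℝ} (hx : x ≠ 0) :
    HasDerivAt (fun x : ℝ => (Real.exp x - 1 - x) / x ^ 2)
      (((Real.exp x - 1) * x ^ 2 - (Real.exp x - 1 - x) * (2 * x)) / (x ^ 2) ^ 2) x := by
  have hnum : HasDerivAt (fun x : ℝ => Real.exp x - 1 - x) (Real.exp x - 1) x := by
    have := ((Real.hasDerivAt_exp x).sub (hasDerivAt_const x 1)).sub (hasDerivAt_id x)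
    exact this.congr_deriv (by simp)
  have hden : HasDerivAt (fun x : ℝ => x ^ 2) (2 * x) x := by
    have := hasDerivAt_pow 2 x
    simpa using this
  exact hnum.div hden (pow_ne_zero 2 hx)

private lemma f_eq_r {x : ℝ} (hx : x ≠ 0) :
    (fun x : ℝ => if x = 0 then (1 / 2 : ℝ) else (Real.exp x - 1 - x) / x ^ 2)
      =ᶠ[nhds x] (fun x : ℝ => (Real.exp x - 1 - x) / x ^ 2) := by
  filter_upwards [isOpen_compl_singleton.mem_nhds (by simpa using hx : x ∈ ({(0:ℝ)}ᶜ))] with y hy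
  simp [if_neg (by simpa using hy : y ≠ 0)]

private lemma f_deriv_pos {x : ℝ} (hx : x ≠ 0)
    (hg : 0 < x * (x * Real.exp x - 2 * Real.exp x + x + 2)) :
    0 < deriv (fun x : ℝ => if x = 0 then (1 / 2 : ℝ) else (Real.exp x - 1 - x) / x ^ 2) x := by
  rw [(f_eq_r hx).deriv_eq, (r_hasDeriv hx).deriv]
  apply div_pos
  · have : (Real.exp x - 1) * x ^ 2 - (Real.exp x - 1 - x) * (2 * x)
        = x * (x * Real.exp x - 2 * Real.exp x + x + 2) := by ring
    rw [this]; exact hg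
  · positivity

private lemma f_cont {x : ℝ} (hx : x ≠ 0) :
    ContinuousAt (fun x : ℝ => if x = 0 then (1 / 2 : ℝ) else (Real.exp x - 1 - x) / x ^ 2) x := by
  apply ContinuousAt.congr _ (f_eq_r hx).symm
  exact ContinuousAt.div (by fun_prop) (by fun_prop) (pow_ne_zero 2 hx)

private lemma f_le_half {x : ℝ} (hx : x < 0) : (Real.exp x - 1 - x) / x ^ 2 ≤ 1 / 2 := by
  rw [div_le_iff₀ (by nlinarith : (0:ℝ) < x ^ 2)]
  have := exp_le_quad (le_of_lt hx)
  nlinarith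

private lemma half_le_f {x : ℝ} (hx : 0 < x) : (1 / 2 : ℝ) ≤ (Real.exp x - 1 - x) / x ^ 2 := by
  rw [le_div_iff₀ (by positivity)]
  have := quad_le_exp (le_of_lt hx)
  nlinarith

theorem stmt_2 :
    Monotone (fun x : ℝ => if x = 0 then (1 / 2 : ℝ) else (Real.exp x - 1 - x) / x ^ 2) := by
  set f := fun x : ℝ => if x = 0 then (1 / 2 : ℝ) else (Real.exp x - 1 - x) / x ^ 2 with hf
  have hneg : StrictMonoOn f (Iio 0) := by
    apply strictMonoOn_of_deriv_pos (convex_Iio 0)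
    · exact fun x hx => (f_cont (ne_of_lt hx)).continuousWithinAt
    · intro x hx
      rw [interior_Iio] at hx
      exact f_deriv_pos (ne_of_lt hx) (mul_pos_of_neg_of_neg hx (g_neg hx))
  have hpos : StrictMonoOn f (Ioi 0) := by
    apply strictMonoOn_of_deriv_pos (convex_Ioi 0)
    · exact fun x hx => (f_cont (ne_of_gt hx)).continuousWithinAt
    · intro x hx
      rw [interior_Ioi] at hx
      exact f_deriv_pos (ne_of_gt hx) (mul_pos hx (g_pos hx))
  have hle : ∀ x < 0, f x ≤ 1 / 2 := by
    intro x hx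
    simp only [hf, if_neg (ne_of_lt hx)]
    exact f_le_half hx
  have hge : ∀ x, 0 < x → 1 / 2 ≤ f x := by
    intro x hx
    simp only [hf, if_neg (ne_of_gt hx)]
    exact half_le_f hx
  intro a b hab
  rcases lt_trichotomy a 0 with ha | ha | ha
  · rcases lt_trichotomy b 0 with hb | hb | hb
    · exact (hneg.monotoneOn) ha hb hab
    · subst hb; simpa [hf] using hle a ha
    · exact le_trans (hle a ha) (le_trans (by norm_num) (hge b hb))
  · subst ha
    rcases eq_or_lt_of_le hab with rfl | hb
    · exact le_rfl
    · simpa [hf] using hge b hb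
  · have hb : 0 < b := lt_of_lt_of_le ha hab
    exact (hpos.monotoneOn) ha hb hab
end

section
/- Let α > 1 and γ > 0, and let X be a real random variable. Then E[exp((log⁺(|X|/γ))^α)] < ∞ if and only if ∑_{n=1}^∞ exp((log n)^α) · (log n)^{α−1} / n · P(|X| > nγ) < ∞. -/
open MeasureTheory Real Filter
open scoped ENNReal NNReal


lemma bern {p a b : ℝ} (hp : 1 ≤ p) (ha : 0 < a) (hab : a ≤ b) :
    p * a ^ (p-1) * (b - a) ≤ b ^ p - a ^ p ∧ b ^ p - a ^ p ≤ p * b ^ (p-1) * (b - a) := by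
  rcases eq_or_lt_of_le hab with rfl | h
  · simp
  · obtain ⟨c, hc, hc'⟩ := exists_hasDerivAt_eq_slope (fun x => x ^ p)
      (fun x => p * x ^ (p-1)) h
      (fun x hx => ((Real.hasDerivAt_rpow_const
        (Or.inl (ne_of_gt (lt_of_lt_of_le ha hx.1)))).continuousAt).continuousWithinAt)
      (fun x hx => Real.hasDerivAt_rpow_const (Or.inl (ne_of_gt (ha.trans hx.1))))
    have hd : b ^ p - a ^ p = p * c ^ (p-1) * (b - a) := by
      rw [eq_div_iff (sub_ne_zero.mpr (ne_of_gt h))] at hc'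
      linarith [hc']
    have hc1 : a ^ (p-1) ≤ c ^ (p-1) := Real.rpow_le_rpow ha.le hc.1.le (by linarith)
    have hc2 : c ^ (p-1) ≤ b ^ (p-1) := Real.rpow_le_rpow (ha.trans hc.1).le hc.2.le (by linarith)
    have hba : 0 ≤ b - a := by linarith
    have hp0 : 0 ≤ p := by linarith
    constructor
    · rw [hd]; nlinarith [mul_le_mul_of_nonneg_right (mul_le_mul_of_nonneg_left hc1 hp0) hba]
    · rw [hd]; nlinarith [mul_le_mul_of_nonneg_right (mul_le_mul_of_nonneg_left hc2 hp0) hba]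

lemma ev (α : ℝ) (hα : 1 < α) : ∀ᶠ j : ℕ in atTop, α * Real.log (j+1) ^ (α-1) / j ≤ 1 := by
  have h0 : Tendsto (fun x : ℝ => Real.log x ^ (α-1) / x ^ (1:ℝ)) atTop (nhds 0) :=
    (isLittleO_log_rpow_rpow_atTop (α-1) one_pos).tendsto_div_nhds_zero
  have hcomp : Tendsto (fun j : ℕ => ((j:ℝ)+1)) atTop atTop :=
    tendsto_atTop_add_const_right _ 1 tendsto_natCast_atTop_atTop
  have h1 : Tendsto (fun j : ℕ => Real.log ((j:ℝ)+1) ^ (α-1) / ((j:ℝ)+1)) atTop (nhds 0) := by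
    have := h0.comp hcomp
    simpa [Function.comp_def, Real.rpow_one] using this
  have h2 : Tendsto (fun j : ℕ => 2 * α * (Real.log ((j:ℝ)+1) ^ (α-1) / ((j:ℝ)+1)))
      atTop (nhds 0) := by simpa using h1.const_mul (2*α)
  have h3 : ∀ᶠ j : ℕ in atTop, 2 * α * (Real.log ((j:ℝ)+1) ^ (α-1) / ((j:ℝ)+1)) < 1 :=
    h2.eventually_lt_const one_pos
  filter_upwards [h3, eventually_ge_atTop 1] with j hj hj1
  have hjR : (1:ℝ) ≤ (j:ℝ) := by exact_mod_cast hj1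
  have hL : 0 ≤ Real.log ((j:ℝ)+1) ^ (α-1) := Real.rpow_nonneg (Real.log_nonneg (by linarith)) _
  have key : α * Real.log ((j:ℝ)+1) ^ (α-1) / (j:ℝ) ≤
      2 * α * (Real.log ((j:ℝ)+1) ^ (α-1) / ((j:ℝ)+1)) := by
    rw [div_le_iff₀ (by linarith : (0:ℝ) < j)]
    have heq : 2 * α * (Real.log ((j:ℝ)+1) ^ (α-1) / ((j:ℝ)+1)) * (j:ℝ)
        = 2 * α * Real.log ((j:ℝ)+1) ^ (α-1) * (j:ℝ) / ((j:ℝ)+1) := by ring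
    rw [heq, le_div_iff₀ (by linarith : (0:ℝ) < (j:ℝ)+1)]
    nlinarith [mul_nonneg (mul_nonneg (by linarith : (0:ℝ) ≤ α) hL) (by linarith : (0:ℝ) ≤ (j:ℝ)-1)]
  linarith [key, hj]

lemma logdiff {x : ℝ} (hx : 0 < x) :
    1/(x+1) ≤ Real.log (x+1) - Real.log x ∧ Real.log (x+1) - Real.log x ≤ 1/x := by
  have h1 : Real.log (x+1) - Real.log x = Real.log ((x+1)/x) := by
    rw [Real.log_div (by linarith) (ne_of_gt hx)]
  have h2 : Real.log (x/(x+1)) = -(Real.log (x+1) - Real.log x) := by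
    rw [Real.log_div (ne_of_gt hx) (by linarith)]; ring
  constructor
  · have := Real.log_le_sub_one_of_pos (show 0 < x/(x+1) by positivity)
    rw [h2] at this
    have hx1 : x/(x+1) = 1 - 1/(x+1) := by field_simp; ring
    rw [hx1] at this; linarith
  · have := Real.log_le_sub_one_of_pos (show 0 < (x+1)/x by positivity)
    rw [← h1] at this
    have hx1 : (x+1)/x = 1 + 1/x := by field_simp
    rw [hx1] at this; linarith

set_option maxHeartbeats 1000000 in
lemma key (α : ℝ) (hα : 1 < α) : ∃ K : ℕ, 2 ≤ K ∧ ∃ C : ℝ, 0 < C ∧ ∀ k : ℕ, K ≤ k →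
    (Real.exp (Real.log ((k:ℝ)+2) ^ α) - Real.exp (Real.log ((k:ℝ)+1) ^ α)
       ≤ C * (Real.exp (Real.log (k:ℝ) ^ α) * Real.log (k:ℝ) ^ (α-1) / (k:ℝ))) ∧
    (Real.exp (Real.log ((k:ℝ)+2) ^ α) * Real.log ((k:ℝ)+2) ^ (α-1) / ((k:ℝ)+2)
       ≤ C * (Real.exp (Real.log ((k:ℝ)+2) ^ α) - Real.exp (Real.log ((k:ℝ)+1) ^ α))) := by
  obtain ⟨K0, hK0⟩ := (ev α hα).exists_forall_of_atTop
  refine ⟨max K0 2, le_max_right _ _,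
    max (Real.exp 1 * Real.exp 1 * α * (2:ℝ) ^ (α-1)) (Real.exp 1 * (2:ℝ) ^ (α-1) / α),
    lt_max_iff.2 (Or.inl (by positivity)), fun k hk => ?_⟩
  have hk2 : 2 ≤ k := le_trans (le_max_right _ _) hk
  have hkR : (2:ℝ) ≤ (k:ℝ) := by exact_mod_cast hk2
  set a0 := Real.log (k:ℝ) with ha0def
  set a := Real.log ((k:ℝ)+1) with hadef
  set b := Real.log ((k:ℝ)+2) with hbdef
  have ha0 : 0 < a0 := Real.log_pos (by linarith)
  have ha0a : a0 ≤ a := Real.log_le_log (by linarith) (by linarith)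
  have hab : a ≤ b := Real.log_le_log (by linarith) (by linarith)
  have ha : 0 < a := lt_of_lt_of_le ha0 ha0a
  have hb : 0 < b := lt_of_lt_of_le ha hab
  -- log differences
  have hd1 := logdiff (show (0:ℝ) < (k:ℝ) by linarith)
  have hd2 := logdiff (show (0:ℝ) < (k:ℝ)+1 by linarith)
  have hba1 : b - a ≤ 1/((k:ℝ)+1) := by
    have := hd2.2; rw [show ((k:ℝ)+1)+1 = (k:ℝ)+2 by ring] at this; exact this
  have hba2 : 1/((k:ℝ)+2) ≤ b - a := by
    have := hd2.1; rw [show ((k:ℝ)+1)+1 = (k:ℝ)+2 by ring] at this; exact this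
  have haa1 : a - a0 ≤ 1/(k:ℝ) := hd1.2
  -- b ≤ 2 * a0
  have hb2a0 : b ≤ 2 * a0 := by
    have h1 : (k:ℝ)+2 ≤ (k:ℝ)*(k:ℝ) := by nlinarith
    have h2 : b ≤ Real.log ((k:ℝ)*(k:ℝ)) := Real.log_le_log (by linarith) h1
    rw [Real.log_mul (by linarith) (by linarith)] at h2
    linarith
  have hb2a : b ≤ 2 * a := by linarith
  -- ev bounds
  have hev1 : α * a ^ (α-1) / (k:ℝ) ≤ 1 := by
    have := hK0 k (le_trans (le_max_left _ _) hk); exact this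
  have hev2 : α * b ^ (α-1) / ((k:ℝ)+1) ≤ 1 := by
    have := hK0 (k+1) (le_trans (le_max_left _ _) (le_trans hk (Nat.le_succ k)))
    rw [show (((k+1:ℕ)):ℝ) = (k:ℝ)+1 by push_cast; ring] at this
    rw [show ((k:ℝ)+1)+1 = (k:ℝ)+2 by ring] at this
    exact this
  -- Bernoulli bounds
  obtain ⟨hδlow, hδup⟩ := bern hα.le ha hab
  obtain ⟨_, hδ0up⟩ := bern hα.le ha0 ha0a
  set δ := b ^ α - a ^ α with hδdef
  set δ0 := a ^ α - a0 ^ α with hδ0def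
  have hapow : (0:ℝ) ≤ a ^ (α-1) := Real.rpow_nonneg ha.le _
  have hbpow : (0:ℝ) ≤ b ^ (α-1) := Real.rpow_nonneg hb.le _
  have ha0pow : (0:ℝ) < a0 ^ (α-1) := Real.rpow_pos_of_pos ha0 _
  have hδnn : 0 ≤ δ := by
    have := Real.rpow_le_rpow ha.le hab (by linarith : (0:ℝ) ≤ α)
    simp only [hδdef]; linarith
  have hδ0nn : 0 ≤ δ0 := by
    have := Real.rpow_le_rpow ha0.le ha0a (by linarith : (0:ℝ) ≤ α)
    simp only [hδ0def]; linarith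
  have hδ1 : δ ≤ 1 := by
    have h1 : δ ≤ α * b ^ (α-1) * (1/((k:ℝ)+1)) := by
      refine le_trans hδup ?_
      exact mul_le_mul_of_nonneg_left hba1 (by positivity)
    calc δ ≤ α * b ^ (α-1) * (1/((k:ℝ)+1)) := h1
      _ = α * b ^ (α-1) / ((k:ℝ)+1) := by ring
      _ ≤ 1 := hev2
  have hδ01 : δ0 ≤ 1 := by
    have h1 : δ0 ≤ α * a ^ (α-1) * (1/(k:ℝ)) := by
      refine le_trans hδ0up ?_
      exact mul_le_mul_of_nonneg_left haa1 (by positivity)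
    calc δ0 ≤ α * a ^ (α-1) * (1/(k:ℝ)) := h1
      _ = α * a ^ (α-1) / (k:ℝ) := by ring
      _ ≤ 1 := hev1
  -- exp estimates
  have hexpδ : Real.exp δ - 1 ≤ δ * Real.exp 1 := by
    have h1 : 1 - δ ≤ Real.exp (-δ) := by linarith [Real.add_one_le_exp (-δ)]
    have h2 : Real.exp δ * (1 - δ) ≤ 1 := by
      have := mul_le_mul_of_nonneg_left h1 (Real.exp_pos δ).le
      rwa [← Real.exp_add, add_neg_cancel, Real.exp_zero] at this
    have h3 : Real.exp δ ≤ Real.exp 1 := Real.exp_le_exp.2 hδ1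
    nlinarith [Real.exp_pos δ]
  have hexpδlow : δ ≤ Real.exp δ - 1 := by linarith [Real.add_one_le_exp δ]
  have hED : Real.exp (b ^ α) - Real.exp (a ^ α) = Real.exp (a ^ α) * (Real.exp δ - 1) := by
    rw [mul_sub, mul_one, ← Real.exp_add, show a ^ α + δ = b ^ α by rw [hδdef]; ring]
  have hEa : Real.exp (a ^ α) ≤ Real.exp (a0 ^ α) * Real.exp 1 := by
    rw [← Real.exp_add]
    exact Real.exp_le_exp.2 (by linarith)
  -- (2*a0)^(α-1) etc
  have h2a0 : (2*a0) ^ (α-1) = 2 ^ (α-1) * a0 ^ (α-1) :=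
    Real.mul_rpow (by norm_num) ha0.le
  have h2a : (2*a) ^ (α-1) = 2 ^ (α-1) * a ^ (α-1) :=
    Real.mul_rpow (by norm_num) ha.le
  have hbpow2a0 : b ^ (α-1) ≤ 2 ^ (α-1) * a0 ^ (α-1) := by
    rw [← h2a0]; exact Real.rpow_le_rpow hb.le hb2a0 (by linarith)
  have hbpow2a : b ^ (α-1) ≤ 2 ^ (α-1) * a ^ (α-1) := by
    rw [← h2a]; exact Real.rpow_le_rpow hb.le hb2a (by linarith)
  constructor
  · -- E1
    have hδb : δ ≤ α * (2 ^ (α-1) * a0 ^ (α-1)) / (k:ℝ) := by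
      have h1 : δ ≤ α * b ^ (α-1) * (1/((k:ℝ)+1)) :=
        le_trans hδup (mul_le_mul_of_nonneg_left hba1 (by positivity))
      have h2 : α * b ^ (α-1) * (1/((k:ℝ)+1)) ≤ α * b ^ (α-1) * (1/(k:ℝ)) := by
        apply mul_le_mul_of_nonneg_left _ (by positivity)
        apply one_div_le_one_div_of_le (by linarith) (by linarith)
      have h3 : α * b ^ (α-1) * (1/(k:ℝ)) ≤ α * (2 ^ (α-1) * a0 ^ (α-1)) * (1/(k:ℝ)) := by
        apply mul_le_mul_of_nonneg_right _ (by positivity)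
        exact mul_le_mul_of_nonneg_left hbpow2a0 (by linarith)
      calc δ ≤ α * b ^ (α-1) * (1/((k:ℝ)+1)) := h1
        _ ≤ α * b ^ (α-1) * (1/(k:ℝ)) := h2
        _ ≤ α * (2 ^ (α-1) * a0 ^ (α-1)) * (1/(k:ℝ)) := h3
        _ = α * (2 ^ (α-1) * a0 ^ (α-1)) / (k:ℝ) := by ring
    have main : Real.exp (b ^ α) - Real.exp (a ^ α)
        ≤ Real.exp 1 * Real.exp 1 * α * 2 ^ (α-1) * (Real.exp (a0 ^ α) * a0 ^ (α-1) / (k:ℝ)) := by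
      rw [hED]
      calc Real.exp (a ^ α) * (Real.exp δ - 1)
          ≤ Real.exp (a ^ α) * (δ * Real.exp 1) :=
            mul_le_mul_of_nonneg_left hexpδ (Real.exp_pos _).le
        _ ≤ (Real.exp (a0 ^ α) * Real.exp 1) * (δ * Real.exp 1) := by
            apply mul_le_mul_of_nonneg_right hEa
            positivity
        _ ≤ (Real.exp (a0 ^ α) * Real.exp 1) * ((α * (2 ^ (α-1) * a0 ^ (α-1)) / (k:ℝ)) * Real.exp 1) := by
            apply mul_le_mul_of_nonneg_left _ (by positivity)
            exact mul_le_mul_of_nonneg_right hδb (Real.exp_pos _).le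
        _ = Real.exp 1 * Real.exp 1 * α * 2 ^ (α-1) * (Real.exp (a0 ^ α) * a0 ^ (α-1) / (k:ℝ)) := by
            ring
    refine le_trans main ?_
    apply mul_le_mul_of_nonneg_right (le_max_left _ _) (by positivity)
  · -- E2
    have hΔlow : Real.exp (a ^ α) * (α * a ^ (α-1) / ((k:ℝ)+2))
        ≤ Real.exp (b ^ α) - Real.exp (a ^ α) := by
      rw [hED]
      apply mul_le_mul_of_nonneg_left _ (Real.exp_pos _).le
      have h1 : α * a ^ (α-1) / ((k:ℝ)+2) = α * a ^ (α-1) * (1/((k:ℝ)+2)) := by ring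
      rw [h1]
      calc α * a ^ (α-1) * (1/((k:ℝ)+2))
          ≤ α * a ^ (α-1) * (b - a) := by
            apply mul_le_mul_of_nonneg_left hba2 (by positivity)
        _ ≤ δ := hδlow
        _ ≤ Real.exp δ - 1 := hexpδlow
    have hup : Real.exp (b ^ α) * b ^ (α-1) / ((k:ℝ)+2)
        ≤ (Real.exp 1 * 2 ^ (α-1) / α) * (Real.exp (a ^ α) * (α * a ^ (α-1) / ((k:ℝ)+2))) := by
      have hEb : Real.exp (b ^ α) ≤ Real.exp (a ^ α) * Real.exp 1 := by
        rw [← Real.exp_add]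
        apply Real.exp_le_exp.2
        nlinarith
      have h2 : Real.exp (b ^ α) * b ^ (α-1) ≤
          (Real.exp (a ^ α) * Real.exp 1) * (2 ^ (α-1) * a ^ (α-1)) := by
        apply mul_le_mul hEb hbpow2a hbpow (by positivity)
      have h3 : (Real.exp 1 * 2 ^ (α-1) / α) * (Real.exp (a ^ α) * (α * a ^ (α-1) / ((k:ℝ)+2)))
          = (Real.exp (a ^ α) * Real.exp 1) * (2 ^ (α-1) * a ^ (α-1)) / ((k:ℝ)+2) := by
        field_simp
      rw [h3]
      apply div_le_div_of_nonneg_right h2 (by linarith)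
    calc Real.exp (b ^ α) * b ^ (α-1) / ((k:ℝ)+2)
        ≤ (Real.exp 1 * 2 ^ (α-1) / α) * (Real.exp (a ^ α) * (α * a ^ (α-1) / ((k:ℝ)+2))) := hup
      _ ≤ (Real.exp 1 * 2 ^ (α-1) / α) * (Real.exp (b ^ α) - Real.exp (a ^ α)) := by
          apply mul_le_mul_of_nonneg_left hΔlow (by positivity)
      _ ≤ (max (Real.exp 1 * Real.exp 1 * α * 2 ^ (α-1)) (Real.exp 1 * 2 ^ (α-1) / α))
            * (Real.exp (b ^ α) - Real.exp (a ^ α)) := by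
          exact mul_le_mul_of_nonneg_right (le_max_right _ _)
            (le_trans (mul_nonneg (Real.exp_pos _).le
              (div_nonneg (mul_nonneg (by linarith) hapow) (by linarith))) hΔlow)

lemma tail_compare {a s : ℕ → ℝ≥0∞} (K : ℕ) (C : ℝ≥0∞) (hC : C ≠ ⊤)
    (hhead : ∀ n, n < K → a n ≠ ⊤) (htail : ∀ n, K ≤ n → a n ≤ C * s n)
    (hs : ∑' n, s n ≠ ⊤) : ∑' n, a n ≠ ⊤ := by
  have hle : ∀ n, a n ≤ (if n < K then a n else 0) + C * s n := by
    intro n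
    by_cases h : n < K
    · simp only [if_pos h]; exact le_self_add
    · simp only [if_neg h, zero_add]; exact htail n (not_lt.1 h)
  have h1 : ∑' n, a n ≤ ∑' n, ((if n < K then a n else 0) + C * s n) := ENNReal.tsum_le_tsum hle
  rw [ENNReal.tsum_add] at h1
  have h2 : ∑' n, (if n < K then a n else 0)
      = ∑ n ∈ Finset.range K, (if n < K then a n else 0) := by
    refine tsum_eq_sum ?_
    intro n hn
    rw [Finset.mem_range] at hn
    simp [hn]
  have h3 : ∑' n, (if n < K then a n else 0) ≠ ⊤ := by
    rw [h2]
    refine (ENNReal.sum_lt_top.2 ?_).ne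
    intro n hn
    rw [Finset.mem_range] at hn
    simp only [if_pos hn]
    exact (hhead n hn).lt_top
  have h4 : ∑' n, C * s n ≠ ⊤ := by
    rw [ENNReal.tsum_mul_left]; exact ENNReal.mul_ne_top hC hs
  exact (h1.trans_lt (ENNReal.add_lt_top.2 ⟨h3.lt_top, h4.lt_top⟩)).ne

theorem stmt_4 {Ω : Type*} [MeasurableSpace Ω] (μ : Measure Ω) [IsProbabilityMeasure μ]
    (α γ : ℝ) (hα : 1 < α) (hγ : 0 < γ) (X : Ω → ℝ) (hXmeas : Measurable X) :
    Integrable (fun ω => Real.exp ((max (Real.log (|X ω| / γ)) 0) ^ α)) μ ↔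
      Summable (fun n : ℕ =>
        Real.exp ((Real.log (n + 1)) ^ α) * (Real.log (n + 1)) ^ (α - 1) / (n + 1) *
          (μ {ω | (n + 1 : ℝ) * γ < |X ω|}).toReal) := by
  have hα0 : (0:ℝ) < α := lt_trans one_pos hα
  obtain ⟨K, hK2, C, hCpos, hkey⟩ := key α hα
  -- basic objects
  set Y : Ω → ℝ := fun ω => |X ω| / γ with hYdef
  have hYmeas : Measurable Y := hXmeas.abs.div_const γ
  have hY0 : ∀ ω, 0 ≤ Y ω := fun ω => div_nonneg (abs_nonneg _) hγ.le
  set g : ℝ → ℝ := fun y => Real.exp (max (Real.log y) 0 ^ α) with hgdef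
  have hgm : Measurable g :=
    Real.measurable_exp.comp ((Real.continuous_rpow_const hα0.le).measurable.comp
      (Real.measurable_log.max measurable_const))
  have hg0 : ∀ y, 0 ≤ g y := fun y => (Real.exp_pos _).le
  have hgmono : ∀ {y z : ℝ}, 0 ≤ y → y ≤ z → g y ≤ g z := by
    intro y z hy hyz
    apply Real.exp_le_exp.2
    apply Real.rpow_le_rpow (le_max_right _ _) _ hα0.le
    rcases eq_or_lt_of_le hy with h0 | h0
    · rw [← h0]; simpa [Real.log_zero] using le_max_right (Real.log z) 0
    · exact max_le_max (Real.log_le_log h0 hyz) le_rfl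
  have hgnat : ∀ x : ℝ, 1 ≤ x → g x = Real.exp (Real.log x ^ α) := by
    intro x hx
    simp only [hgdef]
    rw [max_eq_left (Real.log_nonneg hx)]
  -- ENNReal quantities
  set D : ℕ → ℝ≥0∞ := fun k => ENNReal.ofReal (g ((k:ℝ)+2) - g ((k:ℝ)+1)) with hDdef
  set TT : ℕ → ℝ≥0∞ := fun m => μ {ω | (m:ℝ) < Y ω} with hTTdef
  set c : ℕ → ℝ := fun n =>
    Real.exp (Real.log ((n:ℝ)+1) ^ α) * Real.log ((n:ℝ)+1) ^ (α-1) / ((n:ℝ)+1) with hcdef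
  set W : ℕ → ℝ≥0∞ := fun n => ENNReal.ofReal (c n) with hWdef
  have hc0 : ∀ n, 0 ≤ c n := by
    intro n
    have : (0:ℝ) ≤ Real.log ((n:ℝ)+1) ^ (α-1) :=
      Real.rpow_nonneg (Real.log_nonneg (by push_cast; linarith [Nat.cast_nonneg (α := ℝ) n])) _
    simp only [hcdef]
    positivity
  have hTTmeasset : ∀ r : ℝ, MeasurableSet {ω | r < Y ω} :=
    fun r => measurableSet_lt measurable_const hYmeas
  have hTTfin : ∀ m, TT m ≠ ⊤ := fun m => measure_ne_top μ _
  -- telescoping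
  have htel : ∀ m : ℕ, ENNReal.ofReal (g 1) + ∑ k ∈ Finset.range m, D k
      = ENNReal.ofReal (g ((m:ℝ)+1)) := by
    intro m
    induction m with
    | zero => simp
    | succ n ih =>
      have h1 : 0 ≤ g ((n:ℝ)+2) - g ((n:ℝ)+1) :=
        sub_nonneg.2 (hgmono (by positivity) (by linarith))
      rw [Finset.sum_range_succ, ← add_assoc, ih, hDdef, ← ENNReal.ofReal_add (hg0 _) h1]
      have harg : ((n+1:ℕ):ℝ) + 1 = (n:ℝ) + 2 := by push_cast; ring
      rw [harg]
      congr 1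
      ring
  -- pointwise upper bound
  have hP2 : ∀ ω, ENNReal.ofReal (g (Y ω)) ≤ ENNReal.ofReal (g 1)
      + ∑' k : ℕ, Set.indicator {ω' | (k:ℝ)+1 ≤ Y ω'} (fun _ => D k) ω := by
    intro ω
    set m := Nat.floor (Y ω) with hm
    have h1 : Y ω < (m:ℝ)+1 := Nat.lt_floor_add_one _
    have h2 : ENNReal.ofReal (g (Y ω)) ≤ ENNReal.ofReal (g ((m:ℝ)+1)) :=
      ENNReal.ofReal_le_ofReal (hgmono (hY0 ω) h1.le)
    rw [← htel m] at h2
    refine h2.trans (add_le_add_right ?_ _)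
    have hcong : ∀ k ∈ Finset.range m,
        D k = Set.indicator {ω' | (k:ℝ)+1 ≤ Y ω'} (fun _ => D k) ω := by
      intro k hk
      rw [Set.indicator_of_mem]
      have hkm : (k:ℝ)+1 ≤ (m:ℝ) := by
        have := Finset.mem_range.1 hk
        exact_mod_cast Nat.succ_le_of_lt this
      exact Set.mem_setOf_eq ▸ (hkm.trans (Nat.floor_le (hY0 ω)))
    rw [Finset.sum_congr rfl hcong]
    exact ENNReal.sum_le_tsum _
  -- pointwise lower bound
  have hP1 : ∀ ω, (∑' k : ℕ, Set.indicator {ω' | (k:ℝ)+2 < Y ω'} (fun _ => D k) ω)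
      ≤ ENNReal.ofReal (g (Y ω)) := by
    intro ω
    set m := Nat.floor (Y ω) with hm
    have hsupp : ∀ k ∉ Finset.range (m-1),
        Set.indicator {ω' | (k:ℝ)+2 < Y ω'} (fun _ => D k) ω = 0 := by
      intro k hk
      apply Set.indicator_of_notMem
      simp only [Set.mem_setOf_eq, not_lt]
      by_contra hcon
      push_neg at hcon
      have h1 : (k+2 : ℕ) ≤ m := Nat.le_floor (by push_cast; linarith)
      have h2 : m - 1 ≤ k := by simpa [Finset.mem_range, not_lt] using hk
      omega
    rw [tsum_eq_sum hsupp]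
    have hle : ∑ k ∈ Finset.range (m-1), Set.indicator {ω' | (k:ℝ)+2 < Y ω'} (fun _ => D k) ω
        ≤ ∑ k ∈ Finset.range (m-1), D k :=
      Finset.sum_le_sum (fun k _ => Set.indicator_apply_le (fun _ => le_rfl))
    refine hle.trans ?_
    rcases le_or_gt m 1 with hm1 | hm1
    · have hz : m - 1 = 0 := by omega
      rw [hz]
      simp
    · have h2 := htel (m-1)
      have h3 : ∑ k ∈ Finset.range (m-1), D k ≤ ENNReal.ofReal (g (((m-1:ℕ):ℝ)+1)) :=
        le_add_self.trans_eq h2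
      refine h3.trans (ENNReal.ofReal_le_ofReal (hgmono (by positivity) ?_))
      have hcast : ((m-1:ℕ):ℝ) + 1 = (m:ℝ) := by
        rw [Nat.cast_sub (by omega)]
        ring
      rw [hcast]
      exact Nat.floor_le (hY0 ω)
  -- integral bounds
  set LHSint : ℝ≥0∞ := ∫⁻ ω, ENNReal.ofReal (g (Y ω)) ∂μ with hLHSdef
  have hIup : LHSint ≤ ENNReal.ofReal (g 1) + ∑' k, D k * TT k := by
    have hmeas : ∀ k : ℕ, MeasurableSet {ω' | (k:ℝ)+1 ≤ Y ω'} :=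
      fun k => measurableSet_le measurable_const hYmeas
    calc LHSint ≤ ∫⁻ ω, (ENNReal.ofReal (g 1)
        + ∑' k : ℕ, Set.indicator {ω' | (k:ℝ)+1 ≤ Y ω'} (fun _ => D k) ω) ∂μ :=
          lintegral_mono hP2
      _ = ENNReal.ofReal (g 1) + ∫⁻ ω, (∑' k : ℕ,
            Set.indicator {ω' | (k:ℝ)+1 ≤ Y ω'} (fun _ => D k) ω) ∂μ := by
          rw [lintegral_add_left measurable_const, lintegral_const, measure_univ, mul_one]
      _ = ENNReal.ofReal (g 1) + ∑' k : ℕ, D k * μ {ω' | (k:ℝ)+1 ≤ Y ω'} := by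
          rw [lintegral_tsum (fun k => (measurable_const.indicator (hmeas k)).aemeasurable)]
          congr 1
          exact tsum_congr (fun k => lintegral_indicator_const (hmeas k) (D k))
      _ ≤ ENNReal.ofReal (g 1) + ∑' k, D k * TT k := by
          refine add_le_add_right (ENNReal.tsum_le_tsum (fun k => ?_)) _
          refine mul_le_mul_right (measure_mono (fun ω hω => ?_)) _
          have : (k:ℝ)+1 ≤ Y ω := hω
          exact Set.mem_setOf_eq ▸ (by linarith : (k:ℝ) < Y ω)
  have hIlow : ∑' k, D k * TT (k+2) ≤ LHSint := by
    have hmeas : ∀ k : ℕ, MeasurableSet {ω' | (k:ℝ)+2 < Y ω'} := fun k => hTTmeasset _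
    have hTT2 : ∀ k : ℕ, TT (k+2) = μ {ω' | (k:ℝ)+2 < Y ω'} := by
      intro k
      simp only [hTTdef]
      congr 1
      ext ω
      push_cast
      simp
    calc ∑' k, D k * TT (k+2)
        = ∑' k : ℕ, ∫⁻ ω, Set.indicator {ω' | (k:ℝ)+2 < Y ω'} (fun _ => D k) ω ∂μ := by
          refine tsum_congr (fun k => ?_)
          rw [lintegral_indicator_const (hmeas k) (D k), hTT2 k]
      _ = ∫⁻ ω, (∑' k : ℕ, Set.indicator {ω' | (k:ℝ)+2 < Y ω'} (fun _ => D k) ω) ∂μ :=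
          (lintegral_tsum (fun k => (measurable_const.indicator (hmeas k)).aemeasurable)).symm
      _ ≤ LHSint := lintegral_mono hP1
  -- integrability ↔ LHSint < ⊤
  have hint_iff : Integrable (fun ω => Real.exp ((max (Real.log (|X ω| / γ)) 0) ^ α)) μ
      ↔ LHSint < ⊤ := by
    constructor
    · intro h
      have h2 := h.2
      rw [hasFiniteIntegral_iff_ofReal (ae_of_all _ (fun ω => (Real.exp_pos _).le))] at h2
      exact h2
    · intro h
      refine ⟨(hgm.comp hYmeas).aestronglyMeasurable, ?_⟩
      rw [hasFiniteIntegral_iff_ofReal (ae_of_all _ (fun ω => (Real.exp_pos _).le))]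
      exact h
  -- summability ↔ SE ≠ ⊤
  have hsum_iff : Summable (fun n : ℕ =>
      Real.exp ((Real.log (n + 1)) ^ α) * (Real.log (n + 1)) ^ (α - 1) / (n + 1) *
        (μ {ω | (n + 1 : ℝ) * γ < |X ω|}).toReal) ↔ (∑' n, W n * TT (n+1)) ≠ ⊤ := by
    have hTT1 : ∀ n : ℕ, μ {ω | ((n:ℝ) + 1) * γ < |X ω|} = TT (n+1) := by
      intro n
      simp only [hTTdef]
      congr 1
      ext ω
      simp only [Set.mem_setOf_eq, hYdef, Nat.cast_add, Nat.cast_one]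
      rw [lt_div_iff₀ hγ]
    have hterm : ∀ n : ℕ, ENNReal.ofReal (c n * (TT (n+1)).toReal) = W n * TT (n+1) := by
      intro n
      rw [ENNReal.ofReal_mul (hc0 n), ENNReal.ofReal_toReal (hTTfin _)]
    have hstmt : (fun n : ℕ =>
        Real.exp ((Real.log (n + 1)) ^ α) * (Real.log (n + 1)) ^ (α - 1) / (n + 1) *
          (μ {ω | (n + 1 : ℝ) * γ < |X ω|}).toReal)
        = fun n : ℕ => c n * (TT (n+1)).toReal := by
      funext n
      rw [hTT1 n]
    rw [hstmt]
    constructor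
    · intro hS
      have h1 : (∑' n : ℕ, W n * TT (n+1)) = ENNReal.ofReal (∑' n, c n * (TT (n+1)).toReal) := by
        rw [ENNReal.ofReal_tsum_of_nonneg
          (fun n => mul_nonneg (hc0 n) ENNReal.toReal_nonneg) hS]
        exact tsum_congr (fun n => (hterm n).symm)
      rw [h1]
      exact ENNReal.ofReal_ne_top
    · intro h
      have h1 := ENNReal.summable_toReal h
      refine h1.congr (fun n => ?_)
      rw [← hterm n, ENNReal.toReal_ofReal (mul_nonneg (hc0 n) ENNReal.toReal_nonneg)]
  -- key comparisons in ℝ≥0∞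
  have hE1 : ∀ k, K ≤ k → D k ≤ ENNReal.ofReal C * W (k-1) := by
    intro k hk
    have hk2 : 2 ≤ k := le_trans hK2 hk
    simp only [hDdef, hWdef, hcdef]
    have hcast : ((k-1:ℕ):ℝ) + 1 = (k:ℝ) := by
      rw [Nat.cast_sub (by omega)]
      ring
    rw [hcast, hgnat _ (by linarith [Nat.cast_nonneg (α := ℝ) k]),
      hgnat _ (by linarith [Nat.cast_nonneg (α := ℝ) k]),
      ← ENNReal.ofReal_mul hCpos.le]
    exact ENNReal.ofReal_le_ofReal (hkey k hk).1
  have hE2 : ∀ k, K ≤ k → W (k+1) ≤ ENNReal.ofReal C * D k := by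
    intro k hk
    simp only [hDdef, hWdef, hcdef]
    have hcast : ((k+1:ℕ):ℝ) + 1 = (k:ℝ) + 2 := by push_cast; ring
    rw [hcast, hgnat _ (by linarith [Nat.cast_nonneg (α := ℝ) k]),
      hgnat _ (by linarith [Nat.cast_nonneg (α := ℝ) k]),
      ← ENNReal.ofReal_mul hCpos.le]
    exact ENNReal.ofReal_le_ofReal (hkey k hk).2
  rw [hint_iff, hsum_iff]
  constructor
  · intro h
    have hDT : ∑' k, D k * TT (k+2) ≠ ⊤ := (lt_of_le_of_lt hIlow h).ne
    refine tail_compare (K+1) (ENNReal.ofReal C) ENNReal.ofReal_ne_top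
      (fun n _ => ENNReal.mul_ne_top ENNReal.ofReal_ne_top (hTTfin _))
      (s := fun n => D (n-1) * TT (n+1)) ?_ ?_
    · intro n hn
      have hk : K ≤ n - 1 := by omega
      have h1 : W n ≤ ENNReal.ofReal C * D (n-1) := by
        have := hE2 (n-1) hk
        rwa [show n - 1 + 1 = n by omega] at this
      calc W n * TT (n+1) ≤ (ENNReal.ofReal C * D (n-1)) * TT (n+1) :=
            mul_le_mul_left h1 _
        _ = ENNReal.ofReal C * (D (n-1) * TT (n+1)) := by ring
    · rw [tsum_eq_zero_add' ENNReal.summable]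
      simp only [Nat.add_sub_cancel]
      refine ENNReal.add_ne_top.2 ⟨ENNReal.mul_ne_top ENNReal.ofReal_ne_top (hTTfin _), ?_⟩
      have : ∀ n : ℕ, (n + 1 : ℕ) - 1 = n := fun n => rfl
      simpa [this] using hDT
  · intro h
    have hDT : ∑' k, D k * TT k ≠ ⊤ := by
      refine tail_compare K (ENNReal.ofReal C) ENNReal.ofReal_ne_top
        (fun n _ => ENNReal.mul_ne_top ENNReal.ofReal_ne_top (hTTfin _))
        (s := fun k => W (k-1) * TT k) ?_ ?_
      · intro k hk
        calc D k * TT k ≤ (ENNReal.ofReal C * W (k-1)) * TT k :=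
              mul_le_mul_left (hE1 k hk) _
          _ = ENNReal.ofReal C * (W (k-1) * TT k) := by ring
      · rw [tsum_eq_zero_add' ENNReal.summable]
        simp only [Nat.add_sub_cancel]
        exact ENNReal.add_ne_top.2
          ⟨ENNReal.mul_ne_top ENNReal.ofReal_ne_top (hTTfin _), h⟩
    refine lt_of_le_of_lt hIup ?_
    refine ENNReal.add_lt_top.2 ⟨ENNReal.ofReal_lt_top, hDT.lt_top⟩
end

section
/- Let α > 1, d ≥ 1, and γ > 0, and let X be a real random variable with E[exp((log⁺(|X|/γ))^α) · (log⁺|X|)^{d−1}] < ∞. Then ∑_{𝐧 ∈ ℤ₊^d} exp((log|𝐧|)^α) · (log|𝐧|)^{α−1} / |𝐧| · P(|X| > |𝐧|γ) < ∞, where |𝐧| = n₁⋯n_d. -/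
open MeasureTheory Real

namespace Stmt15

open Finset

noncomputable def phiF (α x : ℝ) : ℝ := Real.exp (Real.log x ^ α)
noncomputable def TF (α x : ℝ) : ℝ := Real.exp (Real.log x ^ α) * Real.log x ^ (α - 1) / x

variable {α : ℝ}







lemma one_le_log_three : (1:ℝ) ≤ Real.log 3 := by
  rw [Real.le_log_iff_exp_le (by norm_num)]
  exact (Real.exp_one_lt_d9.le.trans (by norm_num))

lemma TF_nonneg (hα : 1 < α) {x : ℝ} (hx : 1 ≤ x) : 0 ≤ TF α x := by
  have h0 : (0:ℝ) ≤ Real.log x := Real.log_nonneg hx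
  have h1 := Real.rpow_nonneg h0 (α - 1)
  exact div_nonneg (mul_nonneg (Real.exp_pos _).le h1) (by linarith)

lemma hasDerivAt_phiF (hα : 1 < α) {x : ℝ} (hx : 0 < x) :
    HasDerivAt (phiF α) (α * TF α x) x := by
  have h1 : HasDerivAt Real.log x⁻¹ x := Real.hasDerivAt_log hx.ne'
  have h2 : HasDerivAt (fun y => Real.log y ^ α)
      (x⁻¹ * α * Real.log x ^ (α - 1)) x := h1.rpow_const (Or.inr hα.le)
  have h3 := h2.exp
  convert h3 using 1
  · rfl
  unfold TF
  field_simp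

lemma TF_mono (hα : 1 < α) {a b : ℝ} (ha : 3 ≤ a) (hab : a ≤ b) : TF α a ≤ TF α b := by
  have hb : (3:ℝ) ≤ b := ha.trans hab
  have ha0 : (0:ℝ) < a := by linarith
  have hb0 : (0:ℝ) < b := by linarith
  have hua : 1 ≤ Real.log a := one_le_log_three.trans (Real.log_le_log (by norm_num) ha)
  have hub : 1 ≤ Real.log b := one_le_log_three.trans (Real.log_le_log (by norm_num) hb)
  have huv : Real.log a ≤ Real.log b := Real.log_le_log ha0 hab
  set u := Real.log a
  set v := Real.log b
  have hTFa : TF α a = Real.exp (u ^ α - u) * u ^ (α - 1) := by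
    unfold TF
    rw [Real.exp_sub]
    rw [Real.exp_log ha0]
    ring
  have hTFb : TF α b = Real.exp (v ^ α - v) * v ^ (α - 1) := by
    unfold TF
    rw [Real.exp_sub, Real.exp_log hb0]
    ring
  rw [hTFa, hTFb]
  have hpow : u ^ (α - 1) ≤ v ^ (α - 1) :=
    Real.rpow_le_rpow (by linarith) huv (by linarith)
  have h1 : (1:ℝ) ≤ u ^ (α - 1) := by
    calc (1:ℝ) = 1 ^ (α - 1) := (Real.one_rpow _).symm
    _ ≤ u ^ (α - 1) := Real.rpow_le_rpow (by norm_num) hua (by linarith)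
  have hexp : u ^ α - u ≤ v ^ α - v := by
    have h2 : v ^ α = v * v ^ (α - 1) := by
      rw [← Real.rpow_one_add' (by linarith) (by intro h; linarith)]
      ring_nf
    have h3 : u ^ α = u * u ^ (α - 1) := by
      rw [← Real.rpow_one_add' (by linarith) (by intro h; linarith)]
      ring_nf
    have h4 : v * u ^ (α - 1) ≤ v * v ^ (α - 1) := by
      apply mul_le_mul_of_nonneg_left hpow (by linarith)
    have h5 : (v - u) * 1 ≤ (v - u) * u ^ (α - 1) := by
      apply mul_le_mul_of_nonneg_left h1 (by linarith)
    nlinarith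
  exact mul_le_mul (Real.exp_le_exp.mpr hexp) hpow
    (Real.rpow_nonneg (by linarith) _) (Real.exp_pos _).le

lemma TF_step (hα : 1 < α) {x q : ℝ} (hx : 3 ≤ x) (hq : 0 < q) :
    α * TF α x * q ≤ phiF α (x + q) - phiF α x := by
  have hab : x < x + q := by linarith
  have hcont : ContinuousOn (phiF α) (Set.Icc x (x + q)) := by
    intro y hy
    exact (hasDerivAt_phiF hα (by simp at hy; linarith)).continuousAt.continuousWithinAt
  obtain ⟨c, hc, hslope⟩ := exists_hasDerivAt_eq_slope (phiF α) (fun y => α * TF α y) hab hcont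
    (fun y hy => hasDerivAt_phiF hα (by simp at hy; linarith [hy.1]))
  have hmono : α * TF α x ≤ α * TF α c := by
    apply mul_le_mul_of_nonneg_left (TF_mono hα hx hc.1.le) (by linarith)
  have : α * TF α c = (phiF α (x + q) - phiF α x) / q := by
    rw [hslope]; ring_nf
  rw [this] at hmono
  calc α * TF α x * q ≤ ((phiF α (x + q) - phiF α x) / q) * q := by
        apply mul_le_mul_of_nonneg_right hmono hq.le
  _ = phiF α (x + q) - phiF α x := by field_simp

lemma phiF_mono (hα : 1 < α) {a b : ℝ} (ha : 1 ≤ a) (hab : a ≤ b) : phiF α a ≤ phiF α b := by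
  unfold phiF
  apply Real.exp_le_exp.mpr
  exact Real.rpow_le_rpow (Real.log_nonneg ha) (Real.log_le_log (by linarith) hab) (by linarith)

lemma one_le_phiF (hα : 1 < α) {a : ℝ} (ha : 1 ≤ a) : 1 ≤ phiF α a := by
  unfold phiF
  exact Real.one_le_exp (Real.rpow_nonneg (Real.log_nonneg ha) _)

-- rpow difference bound : b^α - a^α ≤ α * b^(α-1) * (b-a)
lemma rpow_diff_le (hα : 1 < α) {a b : ℝ} (ha : 0 ≤ a) (hab : a ≤ b) :
    b ^ α - a ^ α ≤ α * b ^ (α - 1) * (b - a) := by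
  rcases eq_or_lt_of_le hab with rfl | hlt
  · simp
  have hcont : ContinuousOn (fun y : ℝ => y ^ α) (Set.Icc a b) := by
    intro y hy
    exact (Real.hasDerivAt_rpow_const (p := α) (Or.inr hα.le)).continuousAt.continuousWithinAt
  obtain ⟨c, hc, hslope⟩ := exists_hasDerivAt_eq_slope (fun y : ℝ => y ^ α)
    (fun y => α * y ^ (α - 1)) hlt hcont
    (fun y _ => Real.hasDerivAt_rpow_const (Or.inr hα.le))
  have hcb : α * c ^ (α - 1) ≤ α * b ^ (α - 1) := by
    apply mul_le_mul_of_nonneg_left _ (by linarith)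
    exact Real.rpow_le_rpow (by linarith [hc.1, ha]) hc.2.le (by linarith)
  have : (b ^ α - a ^ α) / (b - a) ≤ α * b ^ (α - 1) := hslope ▸ hcb
  have h2 := mul_le_mul_of_nonneg_right this (by linarith : (0:ℝ) ≤ b - a)
  rwa [div_mul_cancel₀ _ (sub_ne_zero.mpr hlt.ne')] at h2


lemma log_two_le_one : Real.log 2 ≤ 1 := by
  rw [← Real.log_exp 1]
  apply Real.log_le_log (by norm_num)
  nlinarith [Real.exp_one_gt_d9]


lemma ratio_bound (hα : 1 < α) (d : ℕ) (hd : 1 ≤ d) :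
    ∃ C : ℝ, 1 ≤ C ∧ ∀ B : ℝ, 1 ≤ B →
      phiF α (B + B ^ (1 - 1/(d:ℝ))) ≤ C * Real.exp (Real.log B ^ α) := by
  have hd1 : (1:ℝ) ≤ (d:ℝ) := by exact_mod_cast hd
  have hdpos : (0:ℝ) < d := by linarith
  set c : ℝ := d * (α - 1) with hc
  have hcpos : 0 < c := by rw [hc]; exact mul_pos hdpos (by linarith)
  set C₀ : ℝ := α * Real.exp ((α - 1) * Real.log c + 1/d - (α - 1)) with hC₀
  have hαpos : (0:ℝ) < α := by linarith
  have hC₀pos : 0 ≤ C₀ := by rw [hC₀]; positivity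
  refine ⟨Real.exp C₀, Real.one_le_exp hC₀pos, fun B hB => ?_⟩
  have hBpos : (0:ℝ) < B := by linarith
  set L := Real.log B with hL
  have hL0 : 0 ≤ L := Real.log_nonneg hB
  set ε : ℝ := Real.exp (-(L/(d:ℝ))) with hε
  have hεpos : 0 < ε := Real.exp_pos _
  have hε1 : ε ≤ 1 := by
    rw [hε, Real.exp_le_one_iff]
    have : 0 ≤ L / d := by positivity
    linarith
  have hBe : B ^ (1 - 1/(d:ℝ)) = B * ε := by
    have h1 : (1 : ℝ) - 1/(d:ℝ) = 1 + (-(1/(d:ℝ))) := by ring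
    rw [h1, Real.rpow_add hBpos, Real.rpow_one, hε, Real.rpow_def_of_pos hBpos]
    congr 1
    rw [← hL]; ring
  have hsum : B + B ^ (1 - 1/(d:ℝ)) = B * (1 + ε) := by rw [hBe]; ring
  have hlog : Real.log (B + B ^ (1 - 1/(d:ℝ))) ≤ L + ε := by
    rw [hsum, Real.log_mul hBpos.ne' (by linarith)]
    have := Real.log_le_sub_one_of_pos (show (0:ℝ) < 1 + ε by linarith)
    linarith
  have hlognn : 0 ≤ Real.log (B + B ^ (1 - 1/(d:ℝ))) := by
    apply Real.log_nonneg
    have : 0 ≤ B ^ (1 - 1/(d:ℝ)) := Real.rpow_nonneg hBpos.le _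
    linarith
  have hstep4 : Real.log (B + B ^ (1 - 1/(d:ℝ))) ^ α ≤ (L + ε) ^ α :=
    Real.rpow_le_rpow hlognn hlog (by linarith)
  have hstep5 : (L + ε) ^ α - L ^ α ≤ α * (L + ε) ^ (α - 1) * ε := by
    have := rpow_diff_le hα hL0 (show L ≤ L + ε by linarith)
    simpa using this
  have hstep6 : (L + ε) ^ (α - 1) ≤ (L + 1) ^ (α - 1) :=
    Real.rpow_le_rpow (by linarith) (by linarith) (by linarith)
  have hstep7 : (L + 1) ^ (α - 1) = Real.exp (Real.log (L + 1) * (α - 1)) :=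
    Real.rpow_def_of_pos (by linarith) _
  have hstep8 : Real.log (L + 1) ≤ Real.log c + ((L + 1)/c - 1) := by
    have h1 : (L + 1) = c * ((L + 1)/c) := by field_simp
    have h2 : Real.log (L + 1) = Real.log c + Real.log ((L+1)/c) := by
      rw [h1, Real.log_mul hcpos.ne' (by positivity)]
      congr 1
      field_simp
    rw [h2]
    have := Real.log_le_sub_one_of_pos (show (0:ℝ) < (L+1)/c by positivity)
    linarith
  have hkey : α * (L + ε) ^ (α - 1) * ε ≤ C₀ := by
    have h1 : α * (L + ε) ^ (α - 1) * ε ≤ α * (L + 1) ^ (α - 1) * ε := by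
      apply mul_le_mul_of_nonneg_right (mul_le_mul_of_nonneg_left hstep6 (by linarith)) hεpos.le
    have h2 : α * (L + 1) ^ (α - 1) * ε = α * Real.exp (Real.log (L+1) * (α - 1) - L/d) := by
      rw [hstep7, hε, mul_assoc, ← Real.exp_add]
      ring_nf
    have h3 : Real.log (L+1) * (α - 1) - L/d ≤ (α - 1) * Real.log c + 1/d - (α - 1) := by
      have h4 : (α - 1) / c = 1/(d:ℝ) := by
        rw [hc]; field_simp [show α - 1 ≠ 0 by linarith]
      have h5 : Real.log (L+1) * (α-1) ≤ (Real.log c + ((L + 1)/c - 1)) * (α - 1) :=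
        mul_le_mul_of_nonneg_right hstep8 (by linarith)
      have h6 : ((L + 1)/c) * (α - 1) = (L+1)/d := by
        rw [div_mul_eq_mul_div, mul_comm, ← div_mul_eq_mul_div, h4]
        ring
      have h7 : (Real.log c + ((L+1)/c - 1)) * (α-1) = (α-1)*Real.log c + (L+1)/(d:ℝ) - (α-1) := by
        rw [← h6]; ring
      have h8 : (L+1)/(d:ℝ) = L/(d:ℝ) + 1/(d:ℝ) := by ring
      linarith
    calc α * (L + ε) ^ (α - 1) * ε ≤ α * (L + 1) ^ (α - 1) * ε := h1
    _ = α * Real.exp (Real.log (L+1) * (α - 1) - L/d) := h2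
    _ ≤ C₀ := by
        rw [hC₀]
        exact mul_le_mul_of_nonneg_left (Real.exp_le_exp.mpr h3) (by linarith)
  have hfinal : Real.log (B + B ^ (1 - 1/(d:ℝ))) ^ α ≤ L ^ α + C₀ := by linarith
  unfold phiF
  calc Real.exp (Real.log (B + B ^ (1 - 1/(d:ℝ))) ^ α) ≤ Real.exp (L ^ α + C₀) :=
        Real.exp_le_exp.mpr hfinal
  _ = Real.exp C₀ * Real.exp (L ^ α) := by rw [Real.exp_add]; ring


-- generic covering lemma
lemma cover_sum {ι κ : Type*} [Fintype κ] [DecidableEq ι] (t : Finset ι) (g : ι → ℝ)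
    (hg : ∀ x ∈ t, 0 ≤ g x) (P : κ → ι → Prop) [∀ k x, Decidable (P k x)]
    (hP : ∀ x ∈ t, ∃ k, P k x) :
    ∑ x ∈ t, g x ≤ ∑ k : κ, ∑ x ∈ t.filter (P k), g x := by
  have h1 : ∀ k, ∑ x ∈ t.filter (P k), g x = ∑ x ∈ t, if P k x then g x else 0 :=
    fun k => Finset.sum_filter _ _
  simp_rw [h1]
  rw [Finset.sum_comm]
  apply Finset.sum_le_sum
  intro x hx
  obtain ⟨k₀, hk₀⟩ := hP x hx
  calc g x = if P k₀ x then g x else 0 := by simp [hk₀]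
  _ ≤ ∑ k : κ, if P k x then g x else 0 := by
      apply Finset.single_le_sum (f := fun k => if P k x then g x else 0)
        (fun k _ => by split
                       · exact hg x hx
                       · exact le_rfl) (mem_univ k₀)

lemma TF_one (hα : 1 < α) : TF α 1 = 0 := by
  unfold TF
  rw [Real.log_one, Real.zero_rpow (by linarith : α - 1 ≠ 0)]
  ring

lemma TF_two (hα : 1 < α) : TF α 2 ≤ 3 := by
  unfold TF
  have hl2 : (0:ℝ) ≤ Real.log 2 := Real.log_nonneg (by norm_num)
  have hl2' : Real.log 2 ≤ 1 := by
    rw [← Real.log_exp 1]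
    apply Real.log_le_log (by norm_num)
    nlinarith [Real.exp_one_gt_d9]
  have h1 : Real.log 2 ^ α ≤ 1 := Real.rpow_le_one hl2 hl2' (by linarith)
  have h2 : Real.log 2 ^ (α - 1) ≤ 1 := Real.rpow_le_one hl2 hl2' (by linarith)
  have h3 : Real.exp (Real.log 2 ^ α) ≤ Real.exp 1 := Real.exp_le_exp.mpr h1
  have h4 : Real.exp 1 ≤ 3 := by nlinarith [Real.exp_one_lt_d9]
  have h5 : (0:ℝ) ≤ Real.log 2 ^ (α - 1) := Real.rpow_nonneg hl2 _
  have h6 : Real.exp (Real.log 2 ^ α) * Real.log 2 ^ (α - 1) ≤ 3 := by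
    nlinarith [Real.exp_pos (Real.log 2 ^ α)]
  have h7 : (0:ℝ) ≤ Real.exp (Real.log 2 ^ α) * Real.log 2 ^ (α - 1) := by positivity
  linarith
  
lemma harmonic_Icc (N : ℕ) : ∑ m ∈ Finset.Icc 1 N, ((m:ℝ))⁻¹ ≤ 1 + Real.log N := by
  have h1 := harmonic_le_one_add_log N
  have h2 : ((harmonic N : ℚ) : ℝ) = ∑ m ∈ Finset.Icc 1 N, ((m:ℝ))⁻¹ := by
    rw [harmonic_eq_sum_Icc]
    push_cast
    rfl
  rw [← h2]
  exact_mod_cast h1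

-- card of multi-indices with product ≤ 2
lemma small_card (d : ℕ) (s : Finset (Fin d → ℕ+)) (hs : ∀ n ∈ s, (∏ i, (n i : ℕ)) ≤ 2) :
    s.card ≤ d + 1 := by
  classical
  have hsub : s ⊆ Finset.image
      (fun o : Option (Fin d) => o.elim (fun _ => (1:ℕ+)) (fun i => Function.update (fun _ => (1:ℕ+)) i 2))
      Finset.univ := by
    intro n hn
    simp only [Finset.mem_image, Finset.mem_univ, true_and]
    have hp := hs n hn
    have hp1 : 1 ≤ ∏ i, (n i : ℕ) := Finset.one_le_prod' (fun i _ => (n i).one_le)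
    interval_cases h : (∏ i, (n i : ℕ))
    · -- product = 1
      refine ⟨none, ?_⟩
      simp only [Option.elim]
      funext j
      have h5 : (n j : ℕ) = 1 := Finset.prod_eq_one_iff_of_one_le'
        (fun i (_ : i ∈ univ) => (n i).pos) |>.mp h j (mem_univ j)
      exact (PNat.coe_eq_one_iff.mp h5).symm
    · -- product = 2
      have hex : ∃ i, n i ≠ 1 := by
        by_contra hcon
        push_neg at hcon
        simp [hcon] at h
      obtain ⟨i, hi⟩ := hex
      have hidvd : (n i : ℕ) ∣ 2 := h ▸ Finset.dvd_prod_of_mem _ (mem_univ i)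
      have hni : (n i : ℕ) = 2 := by
        rcases (Nat.prime_two).eq_one_or_self_of_dvd _ hidvd with h1 | h2
        · exact absurd (PNat.coe_eq_one_iff.mp h1) hi
        · exact h2
      have hrest : ∀ j, j ≠ i → n j = 1 := by
        intro j hj
        have h3 : (∏ k, (n k : ℕ)) = (n i : ℕ) * ∏ k ∈ univ \ {i}, (n k : ℕ) :=
          Finset.prod_eq_mul_prod_sdiff_singleton_of_mem (mem_univ i) _
        have h4 : ∏ k ∈ univ \ {i}, (n k : ℕ) = 1 := by
          rw [h3, hni] at h
          omega
        have h5 : (n j : ℕ) = 1 := Finset.prod_eq_one_iff_of_one_le'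
          (fun k (_ : k ∈ univ \ {i}) => (n k).pos) |>.mp h4 j
          (Finset.mem_sdiff.mpr ⟨mem_univ j, by simp [hj]⟩)
        exact PNat.coe_eq_one_iff.mp h5
      refine ⟨some i, ?_⟩
      simp only [Option.elim]
      funext j
      by_cases hji : j = i
      · subst hji
        rw [Function.update_self]
        symm
        exact PNat.coe_injective (by simpa using hni)
      · rw [Function.update_of_ne hji, hrest j hji]
  calc s.card ≤ _ := Finset.card_le_card hsub
  _ ≤ (Finset.univ : Finset (Option (Fin d))).card := Finset.card_image_le
  _ = d + 1 := by simp



lemma fiber_bound (hα : 1 < α) (d : ℕ) (hd : 1 ≤ d) (i : Fin d) {B : ℝ} (hB1 : 1 < B)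
    (r : Fin d → ℕ+) (hri : r i = 1)
    (u : Finset (Fin d → ℕ+))
    (hur : ∀ n ∈ u, Function.update n i 1 = r)
    (huB : ∀ n ∈ u, ((∏ j, (n j : ℕ) : ℕ) : ℝ) < B)
    (hu3 : ∀ n ∈ u, 3 ≤ ∏ j, (n j : ℕ))
    (humax : ∀ n ∈ u, ∀ j, n j ≤ n i)
    (hune : u.Nonempty) :
    ∑ n ∈ u, TF α ((∏ j, (n j : ℕ) : ℕ) : ℝ)
      ≤ phiF α (B + B ^ (1 - 1/(d:ℝ))) * ((∏ j, (r j : ℕ) : ℕ) : ℝ)⁻¹ := by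
  classical
  have hα0 : (0:ℝ) < α := by linarith
  set Q : ℕ := ∏ j, (r j : ℕ) with hQ
  have hQpos : 0 < Q := Finset.prod_pos (fun j _ => (r j).pos)
  have hQR : (0:ℝ) < (Q:ℝ) := by exact_mod_cast hQpos
  -- product splits
  have hsplit : ∀ n ∈ u, ∏ j, (n j : ℕ) = Q * (n i : ℕ) := by
    intro n hn
    have e1 : ∏ j, (n j : ℕ) = (n i : ℕ) * ∏ j ∈ univ \ {i}, (n j : ℕ) :=
      Finset.prod_eq_mul_prod_sdiff_singleton_of_mem (mem_univ i) _
    have e2 : Q = (r i : ℕ) * ∏ j ∈ univ \ {i}, (r j : ℕ) :=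
      Finset.prod_eq_mul_prod_sdiff_singleton_of_mem (mem_univ i) _
    have e3 : ∏ j ∈ univ \ {i}, (r j : ℕ) = ∏ j ∈ univ \ {i}, (n j : ℕ) := by
      apply Finset.prod_congr rfl
      intro j hj
      have hji : j ≠ i := by
        rcases Finset.mem_sdiff.mp hj with ⟨_, h2⟩
        simpa using h2
      rw [← hur n hn, Function.update_of_ne hji]
    rw [e1, e2, hri, e3]
    push_cast
    ring
  set NB2 : ℕ := ⌈B⌉₊ with hNB2
  have hNB2pos : 1 ≤ NB2 := Nat.one_le_ceil_iff.mpr (by linarith)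
  set NB : ℕ := NB2 - 1 with hNB
  have hNBle : (NB : ℝ) ≤ B := by
    have h1 : (NB2 : ℝ) < B + 1 := Nat.ceil_lt_add_one (by linarith)
    have h2 : (NB : ℝ) = (NB2 : ℝ) - 1 := by
      rw [hNB]
      push_cast [Nat.cast_sub hNB2pos]
      ring
    linarith
  set K : ℕ := NB / Q with hK
  -- any product value Q*k with k in u is ≤ NB
  have hprodle : ∀ n ∈ u, Q * (n i : ℕ) ≤ NB := by
    intro n hn
    have h1 : ((Q * (n i : ℕ) : ℕ) : ℝ) < B := by
      rw [← hsplit n hn]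
      exact huB n hn
    have h2 : Q * (n i : ℕ) < NB2 := by
      by_contra hcon
      push_neg at hcon
      have : (NB2 : ℝ) ≤ ((Q * (n i : ℕ) : ℕ) : ℝ) := by exact_mod_cast hcon
      have hB2 : B ≤ (NB2 : ℝ) := Nat.le_ceil B
      linarith
    omega
  -- image of k's
  have himg : u.image (fun n => (n i : ℕ)) ⊆ Finset.Icc 1 K := by
    intro k hk
    obtain ⟨n, hn, hnk⟩ := Finset.mem_image.mp hk
    rw [Finset.mem_Icc]
    constructor
    · rw [← hnk]; exact (n i).pos
    · rw [hK, Nat.le_div_iff_mul_le hQpos, ← hnk, mul_comm]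
      exact hprodle n hn
  -- injectivity
  have hinj : ∀ n ∈ u, ∀ n' ∈ u, (n i : ℕ) = (n' i : ℕ) → n = n' := by
    intro n hn n' hn' hii
    funext j
    by_cases hji : j = i
    · subst hji; exact PNat.coe_injective hii
    · have h1 := congrFun ((hur n hn).trans (hur n' hn').symm) j
      rwa [Function.update_of_ne hji, Function.update_of_ne hji] at h1
  -- rewrite sum over image
  have hsum_eq : ∑ n ∈ u, TF α ((∏ j, (n j : ℕ) : ℕ) : ℝ)
      = ∑ k ∈ u.image (fun n => (n i : ℕ)), TF α ((Q:ℝ) * (k:ℝ)) := by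
    rw [Finset.sum_image hinj]
    apply Finset.sum_congr rfl
    intro n hn
    rw [hsplit n hn]
    push_cast
    ring_nf
  -- per-term bound
  have hterm : ∀ k ∈ u.image (fun n => (n i : ℕ)),
      TF α ((Q:ℝ) * (k:ℝ)) ≤ (phiF α ((Q:ℝ) * ((k:ℝ)+1)) - phiF α ((Q:ℝ) * (k:ℝ))) / (α * Q) := by
    intro k hk
    obtain ⟨n, hn, hnk⟩ := Finset.mem_image.mp hk
    have h3 : (3:ℝ) ≤ (Q:ℝ) * (k:ℝ) := by
      have := hu3 n hn
      rw [hsplit n hn, hnk] at this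
      exact_mod_cast this
    have hstep := TF_step hα h3 hQR
    calc TF α ((Q:ℝ) * (k:ℝ)) = (α * TF α ((Q:ℝ)*(k:ℝ)) * Q) / (α * Q) := by
            field_simp
      _ ≤ (phiF α ((Q:ℝ)*(k:ℝ) + Q) - phiF α ((Q:ℝ)*(k:ℝ))) / (α * Q) := by
            apply div_le_div_of_nonneg_right hstep (by positivity)
      _ = (phiF α ((Q:ℝ) * ((k:ℝ)+1)) - phiF α ((Q:ℝ) * (k:ℝ))) / (α * Q) := by
            ring_nf
  -- telescoping
  set g : ℕ → ℝ := fun j => phiF α ((Q:ℝ) * ((j:ℝ)+1)) with hg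
  have htel : ∑ k ∈ u.image (fun n => (n i : ℕ)),
      (phiF α ((Q:ℝ)*((k:ℝ)+1)) - phiF α ((Q:ℝ)*(k:ℝ)))
      ≤ phiF α ((Q:ℝ)*((K:ℝ)+1)) - phiF α (Q:ℝ) := by
    have hQ1 : (1:ℝ) ≤ (Q:ℝ) := by exact_mod_cast hQpos
    have hnonneg : ∀ k ∈ Finset.Icc 1 K,
        0 ≤ phiF α ((Q:ℝ)*((k:ℝ)+1)) - phiF α ((Q:ℝ)*(k:ℝ)) := by
      intro k hk
      have hk1 : (1:ℝ) ≤ (k:ℝ) := by exact_mod_cast (Finset.mem_Icc.mp hk).1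
      have h1 : (1:ℝ) ≤ (Q:ℝ)*(k:ℝ) := by nlinarith
      exact sub_nonneg.mpr (phiF_mono hα h1 (by nlinarith))
    calc ∑ k ∈ u.image (fun n => (n i : ℕ)),
        (phiF α ((Q:ℝ)*((k:ℝ)+1)) - phiF α ((Q:ℝ)*(k:ℝ)))
        ≤ ∑ k ∈ Finset.Icc 1 K, (phiF α ((Q:ℝ)*((k:ℝ)+1)) - phiF α ((Q:ℝ)*(k:ℝ))) :=
          Finset.sum_le_sum_of_subset_of_nonneg himg (fun k hk _ => hnonneg k hk)
    _ = ∑ j ∈ Finset.range K, (g (j+1) - g j) := by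
        rw [← Finset.Ico_add_one_right_eq_Icc, Finset.sum_Ico_eq_sum_range]
        apply Finset.sum_congr (by norm_num)
        intro j _
        rw [hg]
        push_cast
        ring_nf
    _ = g K - g 0 := Finset.sum_range_sub g K
    _ = phiF α ((Q:ℝ)*((K:ℝ)+1)) - phiF α (Q:ℝ) := by rw [hg]; norm_num
  -- upper bound for Q*(K+1)
  have hQK : (Q:ℝ) * ((K:ℝ)+1) ≤ B + (Q:ℝ) := by
    have h1 : K * Q ≤ NB := Nat.div_mul_le_self NB Q
    have h2 : ((K*Q:ℕ):ℝ) ≤ (NB:ℝ) := by exact_mod_cast h1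
    push_cast at h2
    nlinarith
  -- Q ≤ B^(1-1/d)
  obtain ⟨n₀, hn₀⟩ := hune
  have hQk : Q ≤ ((n₀ i : ℕ))^(d-1) := by
    have e2 : Q = (r i : ℕ) * ∏ j ∈ univ \ {i}, (r j : ℕ) :=
      Finset.prod_eq_mul_prod_sdiff_singleton_of_mem (mem_univ i) _
    have e3 : ∏ j ∈ univ \ {i}, (r j : ℕ) = ∏ j ∈ univ \ {i}, (n₀ j : ℕ) := by
      apply Finset.prod_congr rfl
      intro j hj
      have hji : j ≠ i := by
        rcases Finset.mem_sdiff.mp hj with ⟨_, h2⟩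
        simpa using h2
      rw [← hur n₀ hn₀, Function.update_of_ne hji]
    have e4 : ∏ j ∈ univ \ {i}, (n₀ j : ℕ) ≤ ((n₀ i : ℕ))^((univ \ {i} : Finset (Fin d)).card) :=
      Finset.prod_le_pow_card _ _ _ (fun j _ => (PNat.coe_le_coe _ _).mpr (humax n₀ hn₀ j))
    have e5 : (univ \ {i} : Finset (Fin d)).card = d - 1 := by
      rw [Finset.card_sdiff_of_subset (Finset.subset_univ _)]
      simp
    rw [e2, e3, hri]
    simpa [e5] using e4
  have hQkB : ((Q:ℝ)) * ((n₀ i : ℕ):ℝ) < B := by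
    have := huB n₀ hn₀
    rw [hsplit n₀ hn₀] at this
    push_cast at this
    linarith
  have hk0nn : (0:ℝ) ≤ ((n₀ i : ℕ):ℝ) := by positivity
  have hQpow : (Q:ℝ)^(d:ℕ) ≤ B^(d-1:ℕ) := by
    have h1 : (Q:ℝ)^(d:ℕ) = (Q:ℝ)^(d-1:ℕ) * (Q:ℝ) := by
      conv_lhs => rw [show d = (d-1)+1 by omega]
      rw [pow_succ]
    have h2 : (Q:ℝ) ≤ ((n₀ i : ℕ):ℝ)^(d-1:ℕ) := by exact_mod_cast hQk
    have h3 : (Q:ℝ)^(d-1:ℕ) * (Q:ℝ) ≤ (Q:ℝ)^(d-1:ℕ) * ((n₀ i : ℕ):ℝ)^(d-1:ℕ) :=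
      mul_le_mul_of_nonneg_left h2 (by positivity)
    have h4 : (Q:ℝ)^(d-1:ℕ) * ((n₀ i : ℕ):ℝ)^(d-1:ℕ) = ((Q:ℝ) * ((n₀ i : ℕ):ℝ))^(d-1:ℕ) :=
      (mul_pow _ _ _).symm
    have h5 : ((Q:ℝ) * ((n₀ i : ℕ):ℝ))^(d-1:ℕ) ≤ B^(d-1:ℕ) :=
      pow_le_pow_left₀ (by positivity) hQkB.le _
    linarith [h1, h3, h4.le, h5]
  have hd0 : (d:ℝ) ≠ 0 := by
    have : (1:ℝ) ≤ (d:ℝ) := by exact_mod_cast hd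
    linarith
  have hQBe : (Q:ℝ) ≤ B ^ (1 - 1/(d:ℝ)) := by
    have hB0 : (0:ℝ) ≤ B := by linarith
    have h1 : ((Q:ℝ)^(d:ℕ) : ℝ) = (Q:ℝ) ^ ((d:ℕ):ℝ) := (Real.rpow_natCast _ _).symm
    have h2 : (B^(d-1:ℕ) : ℝ) = B ^ (((d-1:ℕ)):ℝ) := (Real.rpow_natCast _ _).symm
    have hcast : (((d-1:ℕ)):ℝ) = (d:ℝ) - 1 := by
      push_cast [Nat.cast_sub hd]
      ring
    have h3 : (Q:ℝ) ^ ((d:ℝ)) ≤ B ^ ((d:ℝ) - 1) := by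
      rw [← hcast]
      calc (Q:ℝ) ^ ((d:ℝ)) = (Q:ℝ)^(d:ℕ) := by rw [h1]
      _ ≤ B^(d-1:ℕ) := hQpow
      _ = B ^ (((d-1:ℕ)):ℝ) := h2
    have h4 : ((Q:ℝ) ^ ((d:ℝ))) ^ (1/(d:ℝ)) ≤ (B ^ ((d:ℝ) - 1)) ^ (1/(d:ℝ)) :=
      Real.rpow_le_rpow (Real.rpow_nonneg hQR.le _) h3 (by positivity)
    have h5 : ((Q:ℝ) ^ ((d:ℝ))) ^ (1/(d:ℝ)) = (Q:ℝ) := by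
      rw [← Real.rpow_mul hQR.le, mul_one_div_cancel hd0, Real.rpow_one]
    have h6 : (B ^ ((d:ℝ) - 1)) ^ (1/(d:ℝ)) = B ^ (1 - 1/(d:ℝ)) := by
      rw [← Real.rpow_mul hB0]
      congr 1
      field_simp
    rw [h5, h6] at h4
    exact h4
  -- assemble
  have hQK2 : (Q:ℝ) * ((K:ℝ)+1) ≤ B + B ^ (1 - 1/(d:ℝ)) := by linarith
  have hQK1 : (1:ℝ) ≤ (Q:ℝ) * ((K:ℝ)+1) := by
    have hQ1 : (1:ℝ) ≤ (Q:ℝ) := by exact_mod_cast hQpos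
    have : (1:ℝ) ≤ (K:ℝ) + 1 := by
      have : (0:ℝ) ≤ (K:ℝ) := by positivity
      linarith
    nlinarith
  have hphi_big : phiF α ((Q:ℝ)*((K:ℝ)+1)) ≤ phiF α (B + B ^ (1 - 1/(d:ℝ))) :=
    phiF_mono hα hQK1 hQK2
  have hphiQ : (0:ℝ) ≤ phiF α (Q:ℝ) := (Real.exp_pos _).le
  calc ∑ n ∈ u, TF α ((∏ j, (n j : ℕ) : ℕ) : ℝ)
      = ∑ k ∈ u.image (fun n => (n i : ℕ)), TF α ((Q:ℝ) * (k:ℝ)) := hsum_eq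
  _ ≤ ∑ k ∈ u.image (fun n => (n i : ℕ)),
      (phiF α ((Q:ℝ)*((k:ℝ)+1)) - phiF α ((Q:ℝ)*(k:ℝ))) / (α * Q) := Finset.sum_le_sum hterm
  _ = (∑ k ∈ u.image (fun n => (n i : ℕ)),
      (phiF α ((Q:ℝ)*((k:ℝ)+1)) - phiF α ((Q:ℝ)*(k:ℝ)))) / (α * Q) := by
        rw [Finset.sum_div]
  _ ≤ (phiF α ((Q:ℝ)*((K:ℝ)+1)) - phiF α (Q:ℝ)) / (α * Q) := by
        apply div_le_div_of_nonneg_right htel (by positivity)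
  _ ≤ phiF α (B + B ^ (1 - 1/(d:ℝ))) / (Q:ℝ) := by
        have h1 : phiF α ((Q:ℝ)*((K:ℝ)+1)) - phiF α (Q:ℝ) ≤ phiF α (B + B ^ (1 - 1/(d:ℝ))) := by
          linarith
        have h2 : (0:ℝ) ≤ phiF α (B + B ^ (1 - 1/(d:ℝ))) := (Real.exp_pos _).le
        have h3 : (Q:ℝ) ≤ α * Q := by nlinarith
        exact div_le_div₀ h2 h1 hQR h3
  _ = phiF α (B + B ^ (1 - 1/(d:ℝ))) * ((∏ j, (r j : ℕ) : ℕ) : ℝ)⁻¹ := by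
        rw [div_eq_mul_inv]


lemma part_i (hα : 1 < α) (d : ℕ) (hd : 1 ≤ d) (i : Fin d) {B Cr : ℝ} (hB1 : 1 < B)
    (hCr1 : 1 ≤ Cr)
    (hCrB : phiF α (B + B ^ (1 - 1/(d:ℝ))) ≤ Cr * Real.exp (Real.log B ^ α))
    (t : Finset (Fin d → ℕ+))
    (htB : ∀ n ∈ t, ((∏ j, (n j : ℕ) : ℕ) : ℝ) < B)
    (ht3 : ∀ n ∈ t, 3 ≤ ∏ j, (n j : ℕ))
    (hmax : ∀ n ∈ t, ∀ j, n j ≤ n i) :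
    ∑ n ∈ t, TF α ((∏ j, (n j : ℕ) : ℕ) : ℝ)
      ≤ Cr * Real.exp (Real.log B ^ α) * (2*(1 + Real.log B)) ^ (d-1) := by
  classical
  have hL : 0 < Real.log B := Real.log_pos hB1
  set rest : (Fin d → ℕ+) → (Fin d → ℕ+) := fun n => Function.update n i 1 with hrest
  rw [← Finset.sum_fiberwise_of_maps_to (fun n hn => Finset.mem_image_of_mem rest hn)
      (fun n => TF α ((∏ j, (n j : ℕ) : ℕ) : ℝ))]
  -- Q sum bound
  set N2 : ℕ := ⌈B⌉₊ with hN2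
  have hH : ∑ m ∈ Finset.Icc 1 N2, ((m:ℝ))⁻¹ ≤ 2*(1 + Real.log B) := by
    have h1 := harmonic_Icc N2
    have hN2pos : 1 ≤ N2 := Nat.one_le_ceil_iff.mpr (by linarith)
    have h2 : (N2 : ℝ) < B + 1 := Nat.ceil_lt_add_one (by linarith)
    have h3 : Real.log N2 ≤ Real.log (2*B) := by
      apply Real.log_le_log (by exact_mod_cast hN2pos)
      linarith
    have h4 : Real.log (2*B) = Real.log 2 + Real.log B := Real.log_mul (by norm_num) (by linarith)
    have h5 := log_two_le_one
    linarith
  have hHnn : 0 ≤ ∑ m ∈ Finset.Icc 1 N2, ((m:ℝ))⁻¹ := by positivity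
  have hQsum : ∑ r ∈ t.image rest, ((∏ j, (r j : ℕ) : ℕ) : ℝ)⁻¹
      ≤ (2*(1 + Real.log B)) ^ (d-1) := by
    set T : Fin d → Finset ℕ := fun j => if j = i then {1} else Finset.Icc 1 N2 with hT
    set v : (Fin d → ℕ+) → (Fin d → ℕ) := fun r j => (r j : ℕ) with hv
    have hvinj : ∀ x ∈ t.image rest, ∀ y ∈ t.image rest, v x = v y → x = y := by
      intro x _ y _ hxy
      funext j
      exact PNat.coe_injective (congrFun hxy j)
    have h1 : ∑ r ∈ t.image rest, ((∏ j, (r j : ℕ) : ℕ) : ℝ)⁻¹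
        = ∑ w ∈ (t.image rest).image v, (∏ j, ((w j : ℕ) : ℝ)⁻¹) := by
      rw [Finset.sum_image hvinj]
      apply Finset.sum_congr rfl
      intro r _
      rw [hv]
      push_cast
      rw [Finset.prod_inv_distrib]
    have hsub : (t.image rest).image v ⊆ Fintype.piFinset T := by
      intro w hw
      obtain ⟨r, hr, hrw⟩ := Finset.mem_image.mp hw
      obtain ⟨n, hn, hnr⟩ := Finset.mem_image.mp hr
      rw [Fintype.mem_piFinset]
      intro j
      rw [hT]
      by_cases hji : j = i
      · subst hji
        simp only [if_pos rfl, Finset.mem_singleton]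
        rw [← hrw, hv, ← hnr, hrest]
        simp
      · simp only [if_neg hji, Finset.mem_Icc]
        have hwj : w j = (n j : ℕ) := by
          rw [← hrw, hv, ← hnr, hrest]
          simp [Function.update_of_ne hji]
        constructor
        · rw [hwj]; exact (n j).pos
        · rw [hwj]
          have h2 : (n j : ℕ) ≤ ∏ k, (n k : ℕ) :=
            Finset.single_le_prod' (f := fun k => (n k : ℕ)) (fun k _ => (n k).pos) (mem_univ j)
          have h3 : ((∏ k, (n k : ℕ) : ℕ) : ℝ) < B := htB n hn
          have h4 : B ≤ (N2 : ℝ) := Nat.le_ceil B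
          have h5 : ∏ k, (n k : ℕ) ≤ N2 := by
            by_contra hcon
            push_neg at hcon
            have : (N2:ℝ) < ((∏ k, (n k : ℕ) : ℕ) : ℝ) := by exact_mod_cast hcon
            linarith
          omega
    have h6 : ∑ w ∈ (t.image rest).image v, (∏ j, ((w j : ℕ) : ℝ)⁻¹)
        ≤ ∑ w ∈ Fintype.piFinset T, (∏ j, ((w j : ℕ) : ℝ)⁻¹) := by
      apply Finset.sum_le_sum_of_subset_of_nonneg hsub
      intro w _ _
      positivity
    have h7 : ∑ w ∈ Fintype.piFinset T, (∏ j, ((w j : ℕ) : ℝ)⁻¹)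
        = ∏ j, ∑ m ∈ T j, ((m:ℕ):ℝ)⁻¹ := (Finset.prod_univ_sum T (fun _ m => ((m:ℕ):ℝ)⁻¹)).symm
    have h8 : ∏ j, ∑ m ∈ T j, ((m:ℕ):ℝ)⁻¹ ≤ (2*(1 + Real.log B)) ^ (d-1) := by
      have h9 : ∏ j, ∑ m ∈ T j, ((m:ℕ):ℝ)⁻¹
          = (∑ m ∈ T i, ((m:ℕ):ℝ)⁻¹) * ∏ j ∈ univ \ {i}, ∑ m ∈ T j, ((m:ℕ):ℝ)⁻¹ :=
        Finset.prod_eq_mul_prod_sdiff_singleton_of_mem (mem_univ i) _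
      have h10 : (∑ m ∈ T i, ((m:ℕ):ℝ)⁻¹) = 1 := by
        rw [hT]; simp
      have h11 : ∏ j ∈ univ \ {i}, (∑ m ∈ T j, ((m:ℕ):ℝ)⁻¹)
          ≤ ∏ _j ∈ univ \ {i}, (2*(1 + Real.log B)) := by
        apply Finset.prod_le_prod
        · intro j _; positivity
        · intro j hj
          have hji : j ≠ i := by
            rcases Finset.mem_sdiff.mp hj with ⟨_, h2⟩
            simpa using h2
          rw [hT]
          simp only [if_neg hji]
          exact hH
      have h12 : (univ \ {i} : Finset (Fin d)).card = d - 1 := by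
        rw [Finset.card_sdiff_of_subset (Finset.subset_univ _)]
        simp
      rw [h9, h10, one_mul]
      calc ∏ j ∈ univ \ {i}, (∑ m ∈ T j, ((m:ℕ):ℝ)⁻¹)
          ≤ ∏ _j ∈ univ \ {i}, (2*(1 + Real.log B)) := h11
      _ = (2*(1 + Real.log B)) ^ (d-1) := by rw [Finset.prod_const, h12]
    rw [h1]
    linarith [h6, h7.le, h7.ge, h8]
  -- per-fiber bounds then sum
  have hfbound : ∀ r ∈ t.image rest,
      ∑ n ∈ t.filter (fun n => rest n = r), TF α ((∏ j, (n j : ℕ) : ℕ) : ℝ)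
        ≤ Cr * Real.exp (Real.log B ^ α) * ((∏ j, (r j : ℕ) : ℕ) : ℝ)⁻¹ := by
    intro r hr
    obtain ⟨n₁, hn₁, hn₁r⟩ := Finset.mem_image.mp hr
    have hri : r i = 1 := by rw [← hn₁r, hrest]; simp
    have hne : (t.filter (fun n => rest n = r)).Nonempty :=
      ⟨n₁, Finset.mem_filter.mpr ⟨hn₁, hn₁r⟩⟩
    have hfb := fiber_bound hα d hd i hB1 r hri (t.filter (fun n => rest n = r))
      (fun n hn => (Finset.mem_filter.mp hn).2)
      (fun n hn => htB n (Finset.mem_filter.mp hn).1)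
      (fun n hn => ht3 n (Finset.mem_filter.mp hn).1)
      (fun n hn => hmax n (Finset.mem_filter.mp hn).1) hne
    refine hfb.trans ?_
    apply mul_le_mul_of_nonneg_right hCrB
    positivity
  calc ∑ r ∈ t.image rest, ∑ n ∈ t.filter (fun n => rest n = r), TF α ((∏ j, (n j : ℕ) : ℕ) : ℝ)
      ≤ ∑ r ∈ t.image rest, Cr * Real.exp (Real.log B ^ α) * ((∏ j, (r j : ℕ) : ℕ) : ℝ)⁻¹ :=
        Finset.sum_le_sum hfbound
  _ = Cr * Real.exp (Real.log B ^ α) * ∑ r ∈ t.image rest, ((∏ j, (r j : ℕ) : ℕ) : ℝ)⁻¹ := by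
        rw [← Finset.mul_sum]
  _ ≤ Cr * Real.exp (Real.log B ^ α) * (2*(1 + Real.log B)) ^ (d-1) := by
        apply mul_le_mul_of_nonneg_left hQsum
        positivity



lemma core (hα : 1 < α) (d : ℕ) (hd : 1 ≤ d) :
    ∃ A : ℝ, 0 < A ∧ ∀ (B : ℝ) (s : Finset (Fin d → ℕ+)),
      (∀ n ∈ s, ((∏ i, (n i : ℕ) : ℕ) : ℝ) < B) →
      ∑ n ∈ s, TF α ((∏ i, (n i : ℕ) : ℕ) : ℝ)
        ≤ A * (Real.exp ((max (Real.log B) 0) ^ α) * (1 + max (Real.log B) 0) ^ (d-1) + 1) := by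
  classical
  obtain ⟨Cr, hCr1, hCr⟩ := ratio_bound hα d hd
  have hCr0 : (0:ℝ) ≤ Cr := by linarith
  refine ⟨3*(d+1) + d * Cr * 2^(d-1), by positivity, fun B s hs => ?_⟩
  -- nonneg of terms
  have hp1 : ∀ n : Fin d → ℕ+, 1 ≤ ∏ i, (n i : ℕ) :=
    fun n => Finset.one_le_prod' (fun i _ => (n i).pos)
  have hp1' : ∀ n : Fin d → ℕ+, (1:ℝ) ≤ ((∏ i, (n i : ℕ) : ℕ) : ℝ) :=
    fun n => by exact_mod_cast hp1 n
  have hTnn : ∀ n : Fin d → ℕ+, 0 ≤ TF α ((∏ i, (n i : ℕ) : ℕ) : ℝ) :=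
    fun n => TF_nonneg hα (hp1' n)
  have hXnn : (0:ℝ) ≤ Real.exp ((max (Real.log B) 0) ^ α) * (1 + max (Real.log B) 0) ^ (d-1) := by
    have h0 : (0:ℝ) ≤ max (Real.log B) 0 := le_max_right _ _
    positivity
  by_cases hB1 : B ≤ 1
  · have hsempty : s = ∅ := by
      rw [Finset.eq_empty_iff_forall_notMem]
      intro n hn
      linarith [hs n hn, hp1' n]
    rw [hsempty]
    simp only [Finset.sum_empty]
    positivity
  push_neg at hB1
  set L := Real.log B with hL
  have hLpos : 0 < L := Real.log_pos hB1
  have hmaxL : max (Real.log B) 0 = L := max_eq_left hLpos.le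
  rw [hmaxL]
  set X := Real.exp (L ^ α) * (1 + L) ^ (d-1) with hX
  have hXnn' : 0 ≤ X := by positivity
  -- split off small products
  rw [← Finset.sum_filter_add_sum_filter_not s (fun n => (∏ i, (n i : ℕ)) ≤ 2)]
  have hpart1 : ∑ n ∈ s.filter (fun n => (∏ i, (n i : ℕ)) ≤ 2), TF α ((∏ i, (n i : ℕ) : ℕ) : ℝ)
      ≤ 3*(d+1) := by
    have hcard := small_card d (s.filter (fun n => (∏ i, (n i : ℕ)) ≤ 2))
      (fun n hn => (Finset.mem_filter.mp hn).2)
    calc ∑ n ∈ s.filter (fun n => (∏ i, (n i : ℕ)) ≤ 2), TF α ((∏ i, (n i : ℕ) : ℕ) : ℝ)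
        ≤ ∑ _n ∈ s.filter (fun n => (∏ i, (n i : ℕ)) ≤ 2), (3:ℝ) := by
          apply Finset.sum_le_sum
          intro n hn
          have h2 := (Finset.mem_filter.mp hn).2
          have h1 := hp1 n
          interval_cases h : (∏ i, (n i : ℕ))
          · rw [show (((1:ℕ)):ℝ) = 1 by norm_num, TF_one hα]; norm_num
          · rw [show (((2:ℕ)):ℝ) = 2 by norm_num]; exact TF_two hα
    _ = (s.filter (fun n => (∏ i, (n i : ℕ)) ≤ 2)).card * 3 := by rw [Finset.sum_const]; ring
    _ ≤ (d+1) * 3 := by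
        apply mul_le_mul_of_nonneg_right _ (by norm_num)
        exact_mod_cast hcard
    _ = 3*(d+1) := by ring
  have hpart2 : ∑ n ∈ s.filter (fun n => ¬ (∏ i, (n i : ℕ)) ≤ 2), TF α ((∏ i, (n i : ℕ) : ℕ) : ℝ)
      ≤ d * Cr * 2^(d-1) * X := by
    haveI : Nonempty (Fin d) := ⟨⟨0, by omega⟩⟩
    set t := s.filter (fun n => ¬ (∏ i, (n i : ℕ)) ≤ 2) with ht
    have hcov : ∑ n ∈ t, TF α ((∏ i, (n i : ℕ) : ℕ) : ℝ)
        ≤ ∑ i : Fin d, ∑ n ∈ t.filter (fun n => ∀ j, n j ≤ n i), TF α ((∏ i, (n i : ℕ) : ℕ) : ℝ) := by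
      apply cover_sum t _ (fun n _ => hTnn n) (fun i n => ∀ j, n j ≤ n i)
      intro n _
      exact Finite.exists_max (fun j => n j)
    have hone : ∀ i : Fin d, ∑ n ∈ t.filter (fun n => ∀ j, n j ≤ n i), TF α ((∏ i, (n i : ℕ) : ℕ) : ℝ)
        ≤ Cr * Real.exp (L ^ α) * (2*(1 + L)) ^ (d-1) := by
      intro i
      apply part_i hα d hd i hB1 hCr1 (hCr B (by linarith))
      · intro n hn
        exact hs n (Finset.mem_filter.mp (Finset.mem_filter.mp hn).1).1
      · intro n hn
        have := (Finset.mem_filter.mp (Finset.mem_filter.mp hn).1).2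
        omega
      · intro n hn
        exact (Finset.mem_filter.mp hn).2
    calc ∑ n ∈ t, TF α ((∏ i, (n i : ℕ) : ℕ) : ℝ) ≤ _ := hcov
    _ ≤ ∑ _i : Fin d, Cr * Real.exp (L ^ α) * (2*(1 + L)) ^ (d-1) :=
        Finset.sum_le_sum (fun i _ => hone i)
    _ = d * (Cr * Real.exp (L ^ α) * (2*(1 + L)) ^ (d-1)) := by
        rw [Finset.sum_const, Finset.card_univ]
        simp [nsmul_eq_mul]
    _ = d * Cr * 2^(d-1) * X := by
        rw [hX, mul_pow]
        ring
  have hfin : (3:ℝ)*(d+1) + d * Cr * 2^(d-1) * X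
      ≤ (3*(d+1) + d * Cr * 2^(d-1)) * (X + 1) := by
    have hc1 : (0:ℝ) ≤ 3*((d:ℝ)+1) := by positivity
    have hc2 : (0:ℝ) ≤ (d:ℝ) * Cr * 2^(d-1) := by positivity
    nlinarith
  linarith [hpart1, hpart2]



-- pointwise comparison with the moment integrand
lemma pointwise_cmp (hα : 1 < α) (d : ℕ) (hd : 1 ≤ d) {γ A : ℝ} (hγ : 0 < γ) (hA : 0 < A) :
    ∃ C₁ C₂ : ℝ, 0 ≤ C₁ ∧ A ≤ C₂ ∧ ∀ x : ℝ, 0 ≤ x →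
      A * (Real.exp ((max (Real.log (x/γ)) 0) ^ α) * (1 + max (Real.log (x/γ)) 0) ^ (d-1) + 1)
        ≤ C₁ * (Real.exp ((max (Real.log (x/γ)) 0) ^ α) * (max (Real.log x) 0) ^ (d-1)) + C₂ := by
  set cγ := max (Real.log γ⁻¹) 0 with hcγ
  have hcγ0 : 0 ≤ cγ := le_max_right _ _
  set c₄ := max (Real.log (Real.exp 1 / γ)) 0 with hc₄
  have hc₄0 : 0 ≤ c₄ := le_max_right _ _
  refine ⟨A * (2 + cγ)^(d-1), A + A * Real.exp (c₄ ^ α) * (1 + c₄)^(d-1), by positivity,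
    by nlinarith [pow_nonneg (by linarith : (0:ℝ) ≤ 1 + c₄) (d-1), Real.exp_pos (c₄ ^ α),
      mul_nonneg (mul_nonneg hA.le (Real.exp_pos (c₄ ^ α)).le)
        (pow_nonneg (by linarith : (0:ℝ) ≤ 1 + c₄) (d-1))], fun x hx => ?_⟩
  set ℓ := max (Real.log (x/γ)) 0 with hℓ
  have hℓ0 : 0 ≤ ℓ := le_max_right _ _
  set E := Real.exp (ℓ ^ α) with hE
  have hE0 : 0 < E := Real.exp_pos _
  by_cases hxe : x < Real.exp 1
  · -- small x
    have hl4 : ℓ ≤ c₄ := by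
      apply max_le _ hc₄0
      rcases eq_or_lt_of_le (show (0:ℝ) ≤ x/γ by positivity) with h0 | h0
      · rw [← h0, Real.log_zero]; exact hc₄0
      · have h1 : Real.log (x/γ) ≤ Real.log (Real.exp 1 / γ) :=
          Real.log_le_log h0 (by gcongr)
        exact h1.trans (le_max_left _ _)
    have h2 : E ≤ Real.exp (c₄ ^ α) :=
      Real.exp_le_exp.mpr (Real.rpow_le_rpow hℓ0 hl4 (by linarith))
    have h3 : (1 + ℓ)^(d-1) ≤ (1 + c₄)^(d-1) := pow_le_pow_left₀ (by linarith) (by linarith) _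
    have h4 : A * (E * (1 + ℓ)^(d-1) + 1) ≤ A + A * Real.exp (c₄ ^ α) * (1 + c₄)^(d-1) := by
      have h5 : E * (1 + ℓ)^(d-1) ≤ Real.exp (c₄ ^ α) * (1 + c₄)^(d-1) :=
        mul_le_mul h2 h3 (by positivity) (Real.exp_pos _).le
      nlinarith
    have h6 : 0 ≤ A * (2 + cγ)^(d-1) * (E * (max (Real.log x) 0) ^ (d-1)) := by positivity
    nlinarith
  · -- large x
    push_neg at hxe
    have hx0 : 0 < x := lt_of_lt_of_le (Real.exp_pos 1) hxe
    have hx1 : 1 ≤ Real.log x := by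
      rw [Real.le_log_iff_exp_le hx0]
      exact hxe
    have hmx : max (Real.log x) 0 = Real.log x := max_eq_left (by linarith)
    have hl : ℓ ≤ Real.log x + cγ := by
      apply max_le _ (by linarith)
      have h1 : Real.log (x/γ) = Real.log x + Real.log γ⁻¹ := by
        rw [div_eq_mul_inv, Real.log_mul hx0.ne' (inv_ne_zero hγ.ne')]
      rw [h1]
      have := le_max_left (Real.log γ⁻¹) 0
      linarith
    have h2 : 1 + ℓ ≤ (2 + cγ) * Real.log x := by nlinarith
    have h3 : (1 + ℓ)^(d-1) ≤ (2 + cγ)^(d-1) * (Real.log x)^(d-1) := by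
      calc (1 + ℓ)^(d-1) ≤ ((2 + cγ) * Real.log x)^(d-1) :=
            pow_le_pow_left₀ (by linarith) h2 _
      _ = (2 + cγ)^(d-1) * (Real.log x)^(d-1) := mul_pow _ _ _
    rw [hmx]
    have h7 : A * (E * (1 + ℓ)^(d-1)) ≤ A * (2 + cγ)^(d-1) * (E * (Real.log x)^(d-1)) := by
      have h8 : E * (1 + ℓ)^(d-1) ≤ E * ((2 + cγ)^(d-1) * (Real.log x)^(d-1)) :=
        mul_le_mul_of_nonneg_left h3 hE0.le
      nlinarith
    have h9 : (0:ℝ) ≤ A * Real.exp (c₄ ^ α) * (1 + c₄)^(d-1) := by positivity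
    nlinarith


end Stmt15

theorem stmt_15 {Ω : Type*} [MeasurableSpace Ω] (μ : Measure Ω) [IsProbabilityMeasure μ]
    (α γ : ℝ) (hα : 1 < α) (d : ℕ) (hd : 1 ≤ d) (hγ : 0 < γ)
    (X : Ω → ℝ) (hXmeas : Measurable X)
    (hmom : Integrable (fun ω =>
      Real.exp ((max (Real.log (|X ω| / γ)) 0) ^ α) * (max (Real.log |X ω|) 0) ^ (d - 1)) μ) :
    Summable (fun n : Fin d → ℕ+ =>
      Real.exp ((Real.log (∏ i, (n i : ℕ) : ℕ)) ^ α) *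
        (Real.log (∏ i, (n i : ℕ) : ℕ)) ^ (α - 1) / (∏ i, (n i : ℕ) : ℕ) *
        (μ {ω | (∏ i, (n i : ℕ) : ℕ) * γ < |X ω|}).toReal) := by
  classical
  obtain ⟨A, hA, hStmt15.core⟩ := Stmt15.core (α := α) hα d hd
  obtain ⟨C₁, C₂, hC₁, hC₂, hpoint⟩ := Stmt15.pointwise_cmp (α := α) hα d hd hγ hA
  set I : Ω → ℝ := fun ω =>
      Real.exp ((max (Real.log (|X ω| / γ)) 0) ^ α) * (max (Real.log |X ω|) 0) ^ (d - 1) with hI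
  set p : (Fin d → ℕ+) → ℕ := fun n => ∏ i, (n i : ℕ) with hp
  set Aset : (Fin d → ℕ+) → Set Ω := fun n => {ω | ((p n : ℕ) : ℝ) * γ < |X ω|} with hAset
  have hAmeas : ∀ n, MeasurableSet (Aset n) :=
    fun n => measurableSet_lt measurable_const hXmeas.abs
  have hp1 : ∀ n, (1:ℝ) ≤ ((p n : ℕ) : ℝ) := by
    intro n
    have h : 1 ≤ ∏ i, ((n i : ℕ)) := Finset.one_le_prod' (fun i _ => (n i).pos)
    rw [hp]
    exact_mod_cast h
  show Summable (fun n : Fin d → ℕ+ => Stmt15.TF α ((p n : ℕ) : ℝ) * (μ (Aset n)).toReal)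
  apply summable_of_sum_le (c := C₁ * (∫ ω, I ω ∂μ) + C₂)
  · intro n
    exact mul_nonneg (Stmt15.TF_nonneg hα (hp1 n)) ENNReal.toReal_nonneg
  · intro u
    have hint_each : ∀ n : Fin d → ℕ+,
        Integrable ((Aset n).indicator (fun _ => Stmt15.TF α ((p n : ℕ) : ℝ))) μ :=
      fun n => (integrable_const _).indicator (hAmeas n)
    have h1 : ∑ n ∈ u, Stmt15.TF α ((p n : ℕ) : ℝ) * (μ (Aset n)).toReal
        = ∫ ω, ∑ n ∈ u, (Aset n).indicator (fun _ => Stmt15.TF α ((p n : ℕ) : ℝ)) ω ∂μ := by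
      rw [integral_finset_sum u (fun n _ => hint_each n)]
      apply Finset.sum_congr rfl
      intro n _
      rw [integral_indicator_const _ (hAmeas n), smul_eq_mul, measureReal_def]
      ring
    have h2 : ∀ ω, ∑ n ∈ u, (Aset n).indicator (fun _ => Stmt15.TF α ((p n : ℕ) : ℝ)) ω
        ≤ C₁ * I ω + C₂ := by
      intro ω
      have h3 : ∑ n ∈ u, (Aset n).indicator (fun _ => Stmt15.TF α ((p n : ℕ) : ℝ)) ω
          = ∑ n ∈ u.filter (fun n => ((p n : ℕ) : ℝ) * γ < |X ω|), Stmt15.TF α ((p n : ℕ) : ℝ) := by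
        rw [Finset.sum_filter]
        apply Finset.sum_congr rfl
        intro n _
        rw [Set.indicator_apply]
        congr 1
      have h4 : ∀ n ∈ u.filter (fun n => ((p n : ℕ) : ℝ) * γ < |X ω|),
          ((p n : ℕ) : ℝ) < |X ω| / γ := by
        intro n hn
        have := (Finset.mem_filter.mp hn).2
        rw [lt_div_iff₀ hγ]
        exact this
      calc ∑ n ∈ u, (Aset n).indicator (fun _ => Stmt15.TF α ((p n : ℕ) : ℝ)) ω
          = ∑ n ∈ u.filter (fun n => ((p n : ℕ) : ℝ) * γ < |X ω|), Stmt15.TF α ((p n : ℕ) : ℝ) := h3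
      _ ≤ A * (Real.exp ((max (Real.log (|X ω|/γ)) 0) ^ α)
            * (1 + max (Real.log (|X ω|/γ)) 0) ^ (d-1) + 1) :=
          hStmt15.core (|X ω|/γ) _ h4
      _ ≤ C₁ * (Real.exp ((max (Real.log (|X ω| / γ)) 0) ^ α)
            * (max (Real.log |X ω|) 0) ^ (d - 1)) + C₂ := hpoint (|X ω|) (abs_nonneg _)
      _ = C₁ * I ω + C₂ := by rw [hI]
    calc ∑ n ∈ u, Stmt15.TF α ((p n : ℕ) : ℝ) * (μ (Aset n)).toReal
        = ∫ ω, ∑ n ∈ u, (Aset n).indicator (fun _ => Stmt15.TF α ((p n : ℕ) : ℝ)) ω ∂μ := h1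
    _ ≤ ∫ ω, (C₁ * I ω + C₂) ∂μ := by
        apply integral_mono (integrable_finset_sum u (fun n _ => hint_each n))
          ((hmom.const_mul C₁).add (integrable_const C₂)) h2
    _ = C₁ * (∫ ω, I ω ∂μ) + C₂ := by
        rw [integral_add (hmom.const_mul C₁) (integrable_const C₂), integral_const]
        simp [measure_univ, integral_const_mul]
end

section
/- Let X₁, …, Xₙ be i.i.d. real random variables, b > 0, and let A = {exactly one k ≤ n has |Xₖ| > b}. Then P(A ∩ {|∑_{k: |Xₖ| ≤ b} Xₖ'| > t}) ≤ n · P(|X₁| > b) · P(|S'_{n−1}| > t), where Xₖ' is the truncation of Xₖ at level b and S'_{n−1} is the sum of n−1 i.i.d. copies of the truncation. -/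
open MeasureTheory ProbabilityTheory
open scoped ENNReal

lemma aux_identDistrib_add {Ω : Type*} [MeasurableSpace Ω] {μ : Measure Ω}
    [IsProbabilityMeasure μ] {U V U' V' : Ω → ℝ}
    (hU : Measurable U) (hV : Measurable V) (hU' : Measurable U') (hV' : Measurable V')
    (h1 : IndepFun U V μ) (h2 : IndepFun U' V' μ)
    (hUU' : IdentDistrib U U' μ μ) (hVV' : IdentDistrib V V' μ μ) :
    IdentDistrib (fun ω => U ω + V ω) (fun ω => U' ω + V' ω) μ μ := by
  have hpair : IdentDistrib (fun ω => (U ω, V ω)) (fun ω => (U' ω, V' ω)) μ μ := by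
    refine ⟨(hU.prodMk hV).aemeasurable, (hU'.prodMk hV').aemeasurable, ?_⟩
    rw [(indepFun_iff_map_prod_eq_prod_map_map hU.aemeasurable hV.aemeasurable).mp h1,
        (indepFun_iff_map_prod_eq_prod_map_map hU'.aemeasurable hV'.aemeasurable).mp h2,
        hUU'.map_eq, hVV'.map_eq]
  exact hpair.comp (measurable_fst.add measurable_snd)

lemma aux_sum_identDistrib {Ω : Type*} [MeasurableSpace Ω] {μ : Measure Ω}
    [IsProbabilityMeasure μ] (Y : ℕ → Ω → ℝ) (hmeas : ∀ i, Measurable (Y i))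
    (hindep : iIndepFun Y μ)
    (hid : ∀ k, IdentDistrib (Y k) (Y 0) μ μ) (s : Finset ℕ) :
    IdentDistrib (fun ω => ∑ k ∈ s, Y k ω)
      (fun ω => ∑ k ∈ Finset.range s.card, Y k ω) μ μ := by
  classical
  induction s using Finset.induction_on with
  | empty => simpa using IdentDistrib.refl aemeasurable_const
  | @insert a s ha ih =>
    have hca : (insert a s).card = s.card + 1 := Finset.card_insert_of_notMem ha
    rw [hca]
    have e1 : (fun ω => ∑ k ∈ insert a s, Y k ω)
        = fun ω => (∑ k ∈ s, Y k ω) + Y a ω := by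
      funext ω; rw [Finset.sum_insert ha]; ring
    have e2 : (fun ω => ∑ k ∈ Finset.range (s.card + 1), Y k ω)
        = fun ω => (∑ k ∈ Finset.range s.card, Y k ω) + Y s.card ω := by
      funext ω; rw [Finset.sum_range_succ]
    rw [e1, e2]
    have hsum_meas : Measurable (fun ω => ∑ k ∈ s, Y k ω) :=
      Finset.measurable_sum s fun k _ => hmeas k
    have hsum_meas' : Measurable (fun ω => ∑ k ∈ Finset.range s.card, Y k ω) :=
      Finset.measurable_sum _ fun k _ => hmeas k
    have h1 : IndepFun (fun ω => ∑ k ∈ s, Y k ω) (Y a) μ := by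
      have := hindep.indepFun_finsetSum_of_notMem hmeas ha
      have he : (∑ j ∈ s, Y j) = fun ω => ∑ k ∈ s, Y k ω := by
        funext ω; simp [Finset.sum_apply]
      rwa [he] at this
    have h2 : IndepFun (fun ω => ∑ k ∈ Finset.range s.card, Y k ω) (Y s.card) μ := by
      have := hindep.indepFun_finsetSum_of_notMem hmeas
        (Finset.notMem_range_self (n := s.card))
      have he : (∑ j ∈ Finset.range s.card, Y j)
          = fun ω => ∑ k ∈ Finset.range s.card, Y k ω := by
        funext ω; simp [Finset.sum_apply]
      rwa [he] at this
    exact aux_identDistrib_add hsum_meas (hmeas a) hsum_meas' (hmeas s.card) h1 h2 ih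
      ((hid a).trans (hid s.card).symm)

theorem stmt_18 {Ω : Type*} [MeasurableSpace Ω] (μ : Measure Ω) [IsProbabilityMeasure μ]
    (n : ℕ) (hn : 1 ≤ n) (X : ℕ → Ω → ℝ)
    (hindep : iIndepFun X μ)
    (hident : ∀ k, IdentDistrib (X k) (X 0) μ μ)
    (b t : ℝ) (hb : 0 < b)
    (T : ℝ → ℝ) (hT : ∀ x, T x = if |x| ≤ b then x else if b < x then b else -b) :
    μ ({ω | ∃! k, k ∈ Finset.range n ∧ b < |X k ω|} ∩
        {ω | t < |∑ k ∈ Finset.range n, (if |X k ω| ≤ b then X k ω else 0)|}) ≤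
      (n : ℝ≥0∞) * μ {ω | b < |X 0 ω|} *
        μ {ω | t < |∑ k ∈ Finset.range (n - 1), T (X k ω)|} := by
  classical
  -- T is measurable
  have hTmeas : Measurable T := by
    have hTe : T = fun x => if |x| ≤ b then x else if b < x then b else -b := funext hT
    rw [hTe]
    exact Measurable.ite (measurableSet_le measurable_abs measurable_const) measurable_id
      (Measurable.ite (measurableSet_lt measurable_const measurable_id)
        measurable_const measurable_const)
  -- measurable modification of X
  have hae : ∀ k, AEMeasurable (X k) μ := fun k => (hident k).aemeasurable_fst
  set X' : ℕ → Ω → ℝ := fun k => (hae k).mk (X k) with hX'def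
  have hmeas : ∀ k, Measurable (X' k) := fun k => (hae k).measurable_mk
  have heq : ∀ k, X k =ᵐ[μ] X' k := fun k => (hae k).ae_eq_mk
  have hall : ∀ᵐ ω ∂μ, ∀ k, X k ω = X' k ω := ae_all_iff.2 heq
  -- transfer independence to X'
  have hindep' : iIndepFun X' μ := by
    rw [iIndepFun_iff_measure_inter_preimage_eq_mul] at hindep ⊢
    intro S sets H
    have h1 : μ (⋂ i ∈ S, X' i ⁻¹' sets i) = μ (⋂ i ∈ S, X i ⁻¹' sets i) := by
      apply measure_congr
      rw [Filter.eventuallyEq_set]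
      filter_upwards [hall] with ω hω
      simp only [Set.mem_iInter, Set.mem_preimage]
      constructor
      · intro h i hi; rw [hω i]; exact h i hi
      · intro h i hi; rw [← hω i]; exact h i hi
    have h2 : ∀ i, μ (X' i ⁻¹' sets i) = μ (X i ⁻¹' sets i) := by
      intro i
      apply measure_congr
      rw [Filter.eventuallyEq_set]
      filter_upwards [heq i] with ω hω
      simp only [Set.mem_preimage, hω]
    rw [h1, hindep S H]
    exact Finset.prod_congr rfl fun i _ => (h2 i).symm
  -- transfer identical distribution to X'
  have hident' : ∀ k, IdentDistrib (X' k) (X' 0) μ μ := fun k =>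
    ((IdentDistrib.of_ae_eq (hae k) (heq k)).symm.trans (hident k)).trans
      (IdentDistrib.of_ae_eq (hae 0) (heq 0))
  -- truncated variables
  set Y : ℕ → Ω → ℝ := fun k => T ∘ X' k with hYdef
  have hYmeas : ∀ k, Measurable (Y k) := fun k => hTmeas.comp (hmeas k)
  have hYindep : iIndepFun Y μ :=
    hindep'.comp (fun _ => T) fun _ => hTmeas
  have hYid : ∀ k, IdentDistrib (Y k) (Y 0) μ μ := fun k => (hident' k).comp hTmeas
  -- replace the LHS set by the X' version
  have hLHS : μ ({ω | ∃! k, k ∈ Finset.range n ∧ b < |X k ω|} ∩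
        {ω | t < |∑ k ∈ Finset.range n, (if |X k ω| ≤ b then X k ω else 0)|})
      = μ ({ω | ∃! k, k ∈ Finset.range n ∧ b < |X' k ω|} ∩
        {ω | t < |∑ k ∈ Finset.range n, (if |X' k ω| ≤ b then X' k ω else 0)|}) := by
    apply measure_congr
    rw [Filter.eventuallyEq_set]
    filter_upwards [hall] with ω hω
    simp only [Set.mem_inter_iff, Set.mem_setOf_eq, hω]
  have hR1 : μ {ω | b < |X 0 ω|} = μ {ω | b < |X' 0 ω|} := by
    apply measure_congr
    rw [Filter.eventuallyEq_set]
    filter_upwards [heq 0] with ω hω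
    simp only [Set.mem_setOf_eq, hω]
  have hR2 : μ {ω | t < |∑ k ∈ Finset.range (n - 1), T (X k ω)|}
      = μ {ω | t < |∑ k ∈ Finset.range (n - 1), T (X' k ω)|} := by
    apply measure_congr
    rw [Filter.eventuallyEq_set]
    filter_upwards [hall] with ω hω
    simp only [Set.mem_setOf_eq, hω]
  rw [hLHS, hR1, hR2]
  -- the covering sets
  set D : ℕ → Set Ω := fun j =>
    (X' j ⁻¹' {x | b < |x|}) ∩
      ((fun ω => ∑ k ∈ (Finset.range n).erase j, Y k ω) ⁻¹' {x | t < |x|}) with hDdef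
  -- inclusion
  have hsub : ({ω | ∃! k, k ∈ Finset.range n ∧ b < |X' k ω|} ∩
        {ω | t < |∑ k ∈ Finset.range n, (if |X' k ω| ≤ b then X' k ω else 0)|})
      ⊆ ⋃ j ∈ Finset.range n, D j := by
    rintro ω ⟨⟨j, ⟨⟨hj1, hj2⟩, huniq⟩⟩, hsum⟩
    refine Set.mem_biUnion hj1 ⟨hj2, ?_⟩
    have hrest : ∀ k ∈ (Finset.range n).erase j, |X' k ω| ≤ b := by
      intro k hk
      by_contra h
      push_neg at h
      exact (Finset.mem_erase.mp hk).1 (huniq k ⟨(Finset.mem_erase.mp hk).2, h⟩)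
    have hkey : ∑ k ∈ Finset.range n, (if |X' k ω| ≤ b then X' k ω else 0)
        = ∑ k ∈ (Finset.range n).erase j, Y k ω := by
      rw [← Finset.add_sum_erase _ _ hj1, if_neg (not_le.mpr hj2), zero_add]
      refine Finset.sum_congr rfl fun k hk => ?_
      rw [if_pos (hrest k hk)]
      simp only [hYdef, Function.comp_apply, hT, if_pos (hrest k hk)]
    simp only [Set.mem_preimage, Set.mem_setOf_eq, ← hkey]
    exact hsum
  refine le_trans (le_trans (measure_mono hsub) (measure_biUnion_finset_le _ _)) ?_
  -- each term
  have hterm : ∀ j ∈ Finset.range n,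
      μ (D j) = μ {ω | b < |X' 0 ω|} *
        μ {ω | t < |∑ k ∈ Finset.range (n - 1), T (X' k ω)|} := by
    intro j hj
    have hjs : j ∉ (Finset.range n).erase j := Finset.notMem_erase j _
    -- mixed family: X' at j, Y elsewhere
    set f : ℕ → Ω → ℝ := fun k => if k = j then X' k else Y k with hfdef
    have hfmeas : ∀ k, Measurable (f k) := by
      intro k
      by_cases h : k = j <;> simp only [hfdef, h, if_true, if_false] <;>
        [exact hmeas j; skip]
      exact (hYmeas k)
    have hfindep : iIndepFun f μ := by
      have := hindep'.comp (mγ := fun _ => Real.measurableSpace) (fun k => if k = j then id else T)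
        (fun k => by by_cases h : k = j <;> simp [h, hTmeas, measurable_id])
      convert this using 2 with k
      by_cases h : k = j <;> simp [hfdef, h, hYdef]
    have hIF := hfindep.indepFun_finsetSum_of_notMem hfmeas hjs
    have he1 : (∑ k ∈ (Finset.range n).erase j, f k)
        = fun ω => ∑ k ∈ (Finset.range n).erase j, Y k ω := by
      funext ω
      rw [Finset.sum_apply]
      refine Finset.sum_congr rfl fun k hk => ?_
      simp [hfdef, (Finset.mem_erase.mp hk).1]
    have he2 : f j = X' j := by simp [hfdef]
    rw [he1, he2] at hIF
    have hmul := hIF.measure_inter_preimage_eq_mul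
      {x | t < |x|} {x | b < |x|}
      (measurableSet_lt measurable_const measurable_abs)
      (measurableSet_lt measurable_const measurable_abs)
    have hDj : μ (D j) = μ (X' j ⁻¹' {x | b < |x|}) *
        μ ((fun ω => ∑ k ∈ (Finset.range n).erase j, Y k ω) ⁻¹' {x | t < |x|}) := by
      rw [hDdef]
      simp only []
      rw [Set.inter_comm, hmul, mul_comm]
    rw [hDj]
    congr 1
    · exact (hident' j).measure_mem_eq (measurableSet_lt measurable_const measurable_abs)
    · have hcard : ((Finset.range n).erase j).card = n - 1 := by
        rw [Finset.card_erase_of_mem hj, Finset.card_range]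
      have hID := aux_sum_identDistrib Y hYmeas hYindep hYid ((Finset.range n).erase j)
      rw [hcard] at hID
      have := hID.measure_mem_eq
        (s := {x | t < |x|}) (measurableSet_lt measurable_const measurable_abs)
      simpa [hYdef] using this
  rw [Finset.sum_congr rfl hterm, Finset.sum_const, Finset.card_range, nsmul_eq_mul,
    ← mul_assoc]
end
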